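/- arXiv:2501.16399 — 9 statements merged into one kernel-verified Lean document; each statement's English description precedes it below -/
import Mathlib

section
/- Let (Ω, 𝓕, μ) be a standard Borel probability space, let D, M, W, Z be random variables taking values in standard Borel measurable spaces, let X take values in a standard Borel space and Y : Ω → ℝ be integrable, and let q be a measurable real-valued function of (D, X, W) such that q(D, X, W) is integrable. Assume Z is conditionally independent of the pair (Y, X) given the σ-algebra σ(D, M, W). If q satisfies the outcome bridge equation, i.e. the conditional expectation μ[Y − q(D, X, W) | σ(D, M, W)] = 0 almost everywhere, then q also solves the non-parametric instrumental variable (NPIV) conditional moment restriction: μ[Y − q(D, X, W) | σ(D, Z, W)] = 0 almost everywhere. -/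
open MeasureTheory ProbabilityTheory

open MeasurableSpace

namespace BridgeAux

variable {Ω : Type*} {m0 : MeasurableSpace Ω} {μ : Measure Ω}

lemma ofReal_lintegral_ne_top {f : Ω → ℝ} (hf : Integrable f μ) :
    ∫⁻ x, ENNReal.ofReal (f x) ∂μ ≠ ⊤ := by
  refine ne_top_of_le_ne_top hf.2.ne (lintegral_mono fun x => ?_)
  exact Real.ofReal_le_enorm (f x)

/-- If an integrable function has vanishing integral on every element of a π-system
generating a sub-σ-algebra `m`, and vanishing total integral, then its conditional
expectation with respect to `m` vanishes a.e. -/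
lemma condexp_ae_zero_of_forall_mem_pi {Ω : Type*} {m : MeasurableSpace Ω}
    {m0 : MeasurableSpace Ω} {μ : Measure Ω} [IsFiniteMeasure μ]
    (hm : m ≤ m0) {C : Set (Set Ω)}
    (hgen : m = MeasurableSpace.generateFrom C) (hpi : IsPiSystem C)
    {f : Ω → ℝ} (hf : Integrable f μ)
    (h0 : ∀ s ∈ C, ∫ x in s, f x ∂μ = 0) (huniv : ∫ x, f x ∂μ = 0) :
    μ[f|m] =ᵐ[μ] 0 := by
  have hC : ∀ s ∈ C, MeasurableSet[m] s := fun s hs => hgen ▸ measurableSet_generateFrom hs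
  set ν₁ : @Measure Ω m0 := μ.withDensity fun x => ENNReal.ofReal (f x) with hν₁def
  set ν₂ : @Measure Ω m0 := μ.withDensity fun x => ENNReal.ofReal (-f x) with hν₂def
  have h1top : ν₁ Set.univ ≠ ⊤ := by
    rw [hν₁def, withDensity_apply _ (MeasurableSet.univ : MeasurableSet[m0] _), Measure.restrict_univ]
    exact ofReal_lintegral_ne_top hf
  have h2top : ν₂ Set.univ ≠ ⊤ := by
    rw [hν₂def, withDensity_apply _ (MeasurableSet.univ : MeasurableSet[m0] _), Measure.restrict_univ]
    exact ofReal_lintegral_ne_top hf.neg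
  haveI : IsFiniteMeasure ν₁ := ⟨lt_top_iff_ne_top.2 h1top⟩
  haveI : IsFiniteMeasure ν₂ := ⟨lt_top_iff_ne_top.2 h2top⟩
  have hsub : ∀ s : Set Ω, MeasurableSet[m0] s →
      ∫ x in s, f x ∂μ = (ν₁ s).toReal - (ν₂ s).toReal := by
    intro s hs
    rw [hν₁def, hν₂def, withDensity_apply _ hs, withDensity_apply _ hs]
    exact integral_eq_lintegral_pos_part_sub_lintegral_neg_part hf.integrableOn
  have hν : ∀ s : Set Ω, MeasurableSet[m] s → ν₁ s = ν₂ s := by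
    have hext : ν₁.trim hm = ν₂.trim hm := by
      refine ext_of_generate_finite C hgen hpi (fun s hs => ?_) ?_
      · rw [trim_measurableSet_eq hm (hC s hs), trim_measurableSet_eq hm (hC s hs)]
        have h := hsub s (hm s (hC s hs))
        rw [h0 s hs] at h
        refine (ENNReal.toReal_eq_toReal_iff' (measure_ne_top _ _) (measure_ne_top _ _)).1 ?_
        linarith
      · rw [trim_measurableSet_eq hm (MeasurableSet.univ : MeasurableSet[m] _),
          trim_measurableSet_eq hm (MeasurableSet.univ : MeasurableSet[m] _)]
        have h := hsub Set.univ (MeasurableSet.univ : MeasurableSet[m0] _)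
        rw [setIntegral_univ, huniv] at h
        refine (ENNReal.toReal_eq_toReal_iff' h1top h2top).1 ?_
        linarith
    intro s hs
    calc ν₁ s = ν₁.trim hm s := (trim_measurableSet_eq hm hs).symm
      _ = ν₂.trim hm s := by rw [hext]
      _ = ν₂ s := trim_measurableSet_eq hm hs
  have hset : ∀ s : Set Ω, MeasurableSet[m] s → ∫ x in s, f x ∂μ = 0 := by
    intro s hs
    rw [hsub s (hm s hs), hν s hs, sub_self]
  refine (ae_eq_condExp_of_forall_setIntegral_eq hm hf
    (fun s _ _ => (integrable_zero _ _ _).integrableOn)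
    (fun s hs _ => by rw [hset s hs]; simp) ?_).symm
  exact stronglyMeasurable_const.aestronglyMeasurable

lemma sup_eq_generateFrom_inter (m₁ m₂ : MeasurableSpace Ω) :
    m₁ ⊔ m₂ = MeasurableSpace.generateFrom
      {t | ∃ t₁ t₂, MeasurableSet[m₁] t₁ ∧ MeasurableSet[m₂] t₂ ∧ t = t₁ ∩ t₂} := by
  refine le_antisymm (sup_le ?_ ?_) (MeasurableSpace.generateFrom_le ?_)
  · intro s hs
    exact measurableSet_generateFrom ⟨s, Set.univ, hs, MeasurableSet.univ,
      (Set.inter_univ s).symm⟩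
  · intro s hs
    exact measurableSet_generateFrom ⟨Set.univ, s, MeasurableSet.univ, hs,
      (Set.univ_inter s).symm⟩
  · rintro t ⟨t₁, t₂, h₁, h₂, rfl⟩
    exact ((le_sup_left : m₁ ≤ m₁ ⊔ m₂) t₁ h₁).inter ((le_sup_right : m₂ ≤ m₁ ⊔ m₂) t₂ h₂)

lemma isPiSystem_inter (m₁ m₂ : MeasurableSpace Ω) :
    IsPiSystem {t : Set Ω | ∃ t₁ t₂, MeasurableSet[m₁] t₁ ∧ MeasurableSet[m₂] t₂ ∧ t = t₁ ∩ t₂} := by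
  rintro t ⟨t₁, t₂, h₁, h₂, rfl⟩ u ⟨u₁, u₂, hu₁, hu₂, rfl⟩ -
  exact ⟨t₁ ∩ u₁, t₂ ∩ u₂, h₁.inter hu₁, h₂.inter hu₂, Set.inter_inter_inter_comm t₁ t₂ u₁ u₂⟩


lemma norm_indicator_one_le {Ω : Type*} (t : Set Ω) (x : Ω) :
    ‖t.indicator (fun _ => (1:ℝ)) x‖ ≤ 1 := by
  by_cases hx : x ∈ t <;> simp [Set.indicator_of_mem, Set.indicator_of_notMem, hx]

lemma integrable_indicator_one {Ω : Type*} {mΩ : MeasurableSpace Ω} {μ : Measure Ω}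
    [IsFiniteMeasure μ] {t : Set Ω} (ht : MeasurableSet t) :
    Integrable (t.indicator fun _ => (1:ℝ)) μ :=
  (integrable_const (1:ℝ)).indicator ht

lemma condexp_indicator_one_bound {Ω : Type*} {mG : MeasurableSpace Ω}
    {mΩ : MeasurableSpace Ω} {μ : Measure Ω} [IsProbabilityMeasure μ]
    (hG : mG ≤ mΩ) {t : Set Ω} (ht : MeasurableSet t) :
    ∀ᵐ x ∂μ, ‖(μ[t.indicator (fun _ => (1:ℝ))|mG]) x‖ ≤ 1 := by
  have hnonneg : 0 ≤ᵐ[μ] μ[t.indicator (fun _ => (1:ℝ))|mG] :=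
    condExp_nonneg (Filter.Eventually.of_forall fun x =>
      Set.indicator_nonneg (fun _ _ => zero_le_one) x)
  have hle1 : t.indicator (fun _ => (1:ℝ)) ≤ᵐ[μ] fun _ => (1:ℝ) :=
    Filter.Eventually.of_forall fun x => by
      have := norm_indicator_one_le t x
      rw [Real.norm_eq_abs] at this
      exact (le_abs_self _).trans this
  have h2 := condExp_mono (m := mG) (integrable_indicator_one ht) (integrable_const (1:ℝ)) hle1
  rw [condExp_const hG (1:ℝ)] at h2
  filter_upwards [hnonneg, h2] with x h0x h1x
  rw [Real.norm_eq_abs, abs_of_nonneg h0x]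
  exact h1x

/-- Conditional independence (in conditional-expectation form) implies that the "error"
`1_{Z⁻¹ B} − μ[1_{Z⁻¹ B} | mG]` has vanishing conditional expectation given `mYX ⊔ mG`. -/
lemma indicator_sub_condexp_sup_ae_zero
    {Ω 𝓩 : Type*} {mG mYX : MeasurableSpace Ω}
    [mΩ : MeasurableSpace Ω] [MeasurableSpace 𝓩]
    {μ : Measure Ω} [IsProbabilityMeasure μ]
    (hG : mG ≤ mΩ) (hYXle : mYX ≤ mΩ)
    {Z : Ω → 𝓩} (hZ : Measurable Z)
    (hCI : ∀ B : Set 𝓩, MeasurableSet B → ∀ t₁ : Set Ω, MeasurableSet[mYX] t₁ →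
      (μ[(Z ⁻¹' B ∩ t₁).indicator (fun _ => (1:ℝ)) | mG]) =ᵐ[μ]
        fun ω => (μ[(Z ⁻¹' B).indicator (fun _ => (1:ℝ)) | mG]) ω *
          (μ[t₁.indicator (fun _ => (1:ℝ)) | mG]) ω)
    {B : Set 𝓩} (hB : MeasurableSet B) :
    (μ[(Z ⁻¹' B).indicator (fun _ => (1:ℝ)) -
        μ[(Z ⁻¹' B).indicator (fun _ => (1:ℝ)) | mG] | mYX ⊔ mG]) =ᵐ[μ] 0 := by
  have hm₂ : mYX ⊔ mG ≤ mΩ := sup_le hYXle hG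
  set iB : Ω → ℝ := (Z ⁻¹' B).indicator (fun _ => (1:ℝ)) with hiB
  set g : Ω → ℝ := μ[iB|mG] with hgdef
  have hZB : MeasurableSet (Z ⁻¹' B) := hZ hB
  have hiB_int : Integrable iB μ := integrable_indicator_one hZB
  have hg_int : Integrable g μ := integrable_condExp
  have hg_bound : ∀ᵐ x ∂μ, ‖g x‖ ≤ 1 := condexp_indicator_one_bound hG hZB
  refine condexp_ae_zero_of_forall_mem_pi hm₂ (sup_eq_generateFrom_inter mYX mG)
    (isPiSystem_inter mYX mG) (hiB_int.sub hg_int) ?_ ?_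
  · rintro t ⟨t₁, t₂, h₁, h₂, rfl⟩
    have ht₁ : MeasurableSet t₁ := hYXle t₁ h₁
    have ht₂ : MeasurableSet t₂ := hG t₂ h₂
    have hi₁_int : Integrable (t₁.indicator fun _ => (1:ℝ)) μ := integrable_indicator_one ht₁
    have hi₂sm : StronglyMeasurable[mG] (t₂.indicator fun _ => (1:ℝ)) :=
      stronglyMeasurable_const.indicator h₂
    have hu_int : Integrable ((Z ⁻¹' B ∩ t₁).indicator fun _ => (1:ℝ)) μ :=
      integrable_indicator_one (hZB.inter ht₁)
    set v : Ω → ℝ := μ[t₁.indicator (fun _ => (1:ℝ))|mG] with hvdef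
    -- first piece : ∫_{t₁∩t₂} iB
    have e1 : ∫ x in t₁ ∩ t₂, iB x ∂μ
        = ∫ x, (t₂.indicator fun _ => (1:ℝ)) x *
            ((Z ⁻¹' B ∩ t₁).indicator fun _ => (1:ℝ)) x ∂μ := by
      rw [← integral_indicator (ht₁.inter ht₂)]
      congr 1
      funext x
      by_cases h1x : x ∈ t₁ <;> by_cases h2x : x ∈ t₂ <;> by_cases h3x : x ∈ Z ⁻¹' B <;>
        simp [hiB, Set.indicator_apply, Set.mem_inter_iff, h1x, h2x, h3x]
    have e1' : ∫ x, (t₂.indicator fun _ => (1:ℝ)) x *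
            ((Z ⁻¹' B ∩ t₁).indicator fun _ => (1:ℝ)) x ∂μ
        = ∫ x, (t₂.indicator fun _ => (1:ℝ)) x * (g x * v x) ∂μ := by
      have hmul := condExp_stronglyMeasurable_mul_of_bound hG hi₂sm hu_int 1
        (Filter.Eventually.of_forall (norm_indicator_one_le t₂))
      have hci := hCI B hB t₁ h₁
      calc ∫ x, (t₂.indicator fun _ => (1:ℝ)) x *
              ((Z ⁻¹' B ∩ t₁).indicator fun _ => (1:ℝ)) x ∂μ
          = ∫ x, (μ[(t₂.indicator fun _ => (1:ℝ)) *
              ((Z ⁻¹' B ∩ t₁).indicator fun _ => (1:ℝ))|mG]) x ∂μ := (integral_condExp hG).symm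
        _ = ∫ x, (t₂.indicator fun _ => (1:ℝ)) x * (g x * v x) ∂μ := by
            refine integral_congr_ae (hmul.trans ?_)
            filter_upwards [hci] with x hx
            simp only [Pi.mul_apply]
            rw [hx]
    -- second piece : ∫_{t₁∩t₂} g
    have e2 : ∫ x in t₁ ∩ t₂, g x ∂μ
        = ∫ x, ((t₂.indicator fun _ => (1:ℝ)) x * g x) * (t₁.indicator fun _ => (1:ℝ)) x ∂μ := by
      rw [← integral_indicator (ht₁.inter ht₂)]
      congr 1
      funext x
      by_cases h1x : x ∈ t₁ <;> by_cases h2x : x ∈ t₂ <;>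
        simp [Set.indicator_apply, Set.mem_inter_iff, h1x, h2x]
    have e2' : ∫ x, ((t₂.indicator fun _ => (1:ℝ)) x * g x) * (t₁.indicator fun _ => (1:ℝ)) x ∂μ
        = ∫ x, ((t₂.indicator fun _ => (1:ℝ)) x * g x) * v x ∂μ := by
      have hsm : StronglyMeasurable[mG] ((t₂.indicator fun _ => (1:ℝ)) * g) :=
        hi₂sm.mul stronglyMeasurable_condExp
      have hbd : ∀ᵐ x ∂μ, ‖((t₂.indicator fun _ => (1:ℝ)) * g) x‖ ≤ 1 := by
        filter_upwards [hg_bound] with x hgx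
        rw [Pi.mul_apply, norm_mul]
        calc ‖(t₂.indicator fun _ => (1:ℝ)) x‖ * ‖g x‖ ≤ 1 * 1 :=
          mul_le_mul (norm_indicator_one_le t₂ x) hgx (norm_nonneg _) zero_le_one
        _ = 1 := by norm_num
      have hmul := condExp_stronglyMeasurable_mul_of_bound hG hsm hi₁_int 1 hbd
      calc ∫ x, ((t₂.indicator fun _ => (1:ℝ)) x * g x) * (t₁.indicator fun _ => (1:ℝ)) x ∂μ
          = ∫ x, (μ[((t₂.indicator fun _ => (1:ℝ)) * g) *
              (t₁.indicator fun _ => (1:ℝ))|mG]) x ∂μ := (integral_condExp hG).symm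
        _ = ∫ x, ((t₂.indicator fun _ => (1:ℝ)) x * g x) * v x ∂μ := by
            refine integral_congr_ae (hmul.trans ?_)
            exact Filter.Eventually.of_forall fun x => by simp [Pi.mul_apply, hvdef]
    have : ∫ x in t₁ ∩ t₂, (iB - g) x ∂μ
        = ∫ x in t₁ ∩ t₂, iB x ∂μ - ∫ x in t₁ ∩ t₂, g x ∂μ :=
      integral_sub hiB_int.integrableOn hg_int.integrableOn
    rw [this, e1, e1', e2, e2']
    rw [sub_eq_zero]
    congr 1
    funext x
    ring
  · have : ∫ x, (iB - g) x ∂μ = ∫ x, iB x ∂μ - ∫ x, g x ∂μ := integral_sub hiB_int hg_int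
    rw [this, hgdef, integral_condExp hG, sub_self]


/-- Main computation: if the bridge equation holds and the indicator error has vanishing
conditional expectation on `m₂`, then the NPIV moment vanishes on sections `Z⁻¹ B ∩ s`. -/
lemma setIntegral_section_eq_zero
    {Ω 𝓩 : Type*} {mG m₂ : MeasurableSpace Ω}
    [mΩ : MeasurableSpace Ω] [MeasurableSpace 𝓩]
    {μ : Measure Ω} [IsProbabilityMeasure μ]
    (hG : mG ≤ mΩ) (hm₂ : m₂ ≤ mΩ) (hGm₂ : mG ≤ m₂)
    {Z : Ω → 𝓩} (hZ : Measurable Z) {B : Set 𝓩} (hB : MeasurableSet B)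
    {R : Ω → ℝ} (hRint : Integrable R μ) (hRm2 : StronglyMeasurable[m₂] R)
    (hk : (μ[(Z ⁻¹' B).indicator (fun _ => (1:ℝ)) -
        μ[(Z ⁻¹' B).indicator (fun _ => (1:ℝ)) | mG] | m₂]) =ᵐ[μ] 0)
    (hBridge : μ[R|mG] =ᵐ[μ] 0)
    {s : Set Ω} (hs : MeasurableSet[mG] s) :
    ∫ ω in Z ⁻¹' B ∩ s, R ω ∂μ = 0 := by
  set iB : Ω → ℝ := (Z ⁻¹' B).indicator (fun _ => (1:ℝ)) with hiB
  set g : Ω → ℝ := μ[iB|mG] with hgdef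
  set k : Ω → ℝ := iB - g with hkdef
  set h : Ω → ℝ := s.indicator R with hhdef
  have hZB : MeasurableSet (Z ⁻¹' B) := hZ hB
  have hsΩ : MeasurableSet s := hG s hs
  have hh_int : Integrable h μ := hRint.indicator hsΩ
  have hh_sm : StronglyMeasurable[m₂] h := hRm2.indicator (hGm₂ s hs)
  have hiB_int : Integrable iB μ := integrable_indicator_one hZB
  have hg_int : Integrable g μ := integrable_condExp
  have hg_bound : ∀ᵐ x ∂μ, ‖g x‖ ≤ 1 := condexp_indicator_one_bound hG hZB
  have hg_aesm : AEStronglyMeasurable g μ :=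
    (stronglyMeasurable_condExp.mono hG).aestronglyMeasurable
  have hk_int : Integrable k μ := hiB_int.sub hg_int
  have hk_aesm : AEStronglyMeasurable k μ := hk_int.1
  have hk_bound : ∀ᵐ x ∂μ, ‖k x‖ ≤ 2 := by
    filter_upwards [hg_bound] with x hgx
    calc ‖k x‖ = ‖iB x - g x‖ := by rw [hkdef]; simp [Pi.sub_apply]
      _ ≤ ‖iB x‖ + ‖g x‖ := norm_sub_le _ _
      _ ≤ 1 + 1 := add_le_add (norm_indicator_one_le _ x) hgx
      _ = 2 := by norm_num
  -- Integrability of the pieces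
  have hhk_int : Integrable (h * k) μ := by
    have h1 : Integrable (fun x => k x * h x) μ := hh_int.bdd_mul hk_aesm hk_bound
    have : (h * k) = fun x => k x * h x := funext fun x => mul_comm _ _
    rwa [this]
  have hgh_int : Integrable (g * h) μ := hh_int.bdd_mul hg_aesm hg_bound
  -- ∫ h·k = 0
  have hint_hk : ∫ x, (h * k) x ∂μ = 0 := by
    have hpull : μ[h * k|m₂] =ᵐ[μ] h * μ[k|m₂] :=
      condExp_mul_of_stronglyMeasurable_left hh_sm hhk_int hk_int
    have hz : μ[h * k|m₂] =ᵐ[μ] 0 := by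
      refine hpull.trans ?_
      filter_upwards [hk] with x hx
      simp only [Pi.mul_apply, hx, Pi.zero_apply, mul_zero]
    rw [← integral_condExp hm₂, integral_congr_ae hz]; simp
  -- ∫ g·h = 0
  have hint_gh : ∫ x, (g * h) x ∂μ = 0 := by
    have hpull : μ[g * h|mG] =ᵐ[μ] g * μ[h|mG] :=
      condExp_stronglyMeasurable_mul_of_bound hG stronglyMeasurable_condExp hh_int 1 hg_bound
    have hcondh : μ[h|mG] =ᵐ[μ] 0 := by
      refine (condExp_indicator hRint hs).trans ?_
      filter_upwards [hBridge] with x hx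
      by_cases hxs : x ∈ s <;> simp [Set.indicator_apply, hxs, hx]
    have hz : μ[g * h|mG] =ᵐ[μ] 0 := by
      refine hpull.trans ?_
      filter_upwards [hcondh] with x hx
      simp only [Pi.mul_apply, hx, Pi.zero_apply, mul_zero]
    rw [← integral_condExp hG, integral_congr_ae hz]; simp
  -- assemble
  have hmain : ∫ ω in Z ⁻¹' B ∩ s, R ω ∂μ = ∫ x, (h * k) x ∂μ + ∫ x, (g * h) x ∂μ := by
    rw [← integral_indicator (hZB.inter hsΩ), ← integral_add hhk_int hgh_int]
    congr 1
    funext x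
    by_cases h1x : x ∈ Z ⁻¹' B <;> by_cases h2x : x ∈ s <;>
      simp [hhdef, hkdef, hiB, Set.indicator_apply, Set.mem_inter_iff, h1x, h2x,
        Pi.sub_apply, Pi.mul_apply, Pi.add_apply] <;> ring
  rw [hmain, hint_hk, hint_gh, add_zero]

end BridgeAux

/-- **Theorem 1, identification via the bridge function.**
On a standard Borel probability space, if `Z` is conditionally independent of the pair
`(Y, X)` given `σ(D, M, W)`, and the outcome bridge equation
`μ[Y − q(D, X, W) | σ(D, M, W)] = 0` holds a.e., then `q` also solves the NPIV conditional
moment restriction `μ[Y − q(D, X, W) | σ(D, Z, W)] = 0` a.e. -/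
theorem bridge_function_solves_npiv
    {Ω : Type*} [mΩ : MeasurableSpace Ω] [StandardBorelSpace Ω]
    (μ : Measure Ω) [IsProbabilityMeasure μ]
    {𝓓 𝓜 𝓦 𝓩 𝓧 : Type*}
    [MeasurableSpace 𝓓] [StandardBorelSpace 𝓓]
    [MeasurableSpace 𝓜] [StandardBorelSpace 𝓜]
    [MeasurableSpace 𝓦] [StandardBorelSpace 𝓦]
    [MeasurableSpace 𝓩] [StandardBorelSpace 𝓩]
    [MeasurableSpace 𝓧] [StandardBorelSpace 𝓧]
    (D : Ω → 𝓓) (M : Ω → 𝓜) (W : Ω → 𝓦) (Z : Ω → 𝓩) (X : Ω → 𝓧) (Y : Ω → ℝ)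
    (hD : Measurable D) (hM : Measurable M) (hW : Measurable W)
    (hZ : Measurable Z) (hX : Measurable X) (hYmeas : Measurable Y)
    (hY : Integrable Y μ)
    (q : 𝓓 × 𝓧 × 𝓦 → ℝ) (hq : Measurable q)
    (hqInt : Integrable (fun ω => q (D ω, X ω, W ω)) μ)
    -- `σ(D, M, W)` and `σ(D, Z, W)` are sub-σ-algebras of `𝓕`
    (hDMW : MeasurableSpace.comap (fun ω => (D ω, M ω, W ω)) inferInstance ≤ mΩ)
    (hDZW : MeasurableSpace.comap (fun ω => (D ω, Z ω, W ω)) inferInstance ≤ mΩ)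
    -- `Z ⫫ (Y, X) | σ(D, M, W)`
    (hCI : CondIndepFun
      (MeasurableSpace.comap (fun ω => (D ω, M ω, W ω)) inferInstance) hDMW
      Z (fun ω => (Y ω, X ω)) μ)
    -- the outcome bridge equation
    (hBridge : μ[(fun ω => Y ω - q (D ω, X ω, W ω)) |
        MeasurableSpace.comap (fun ω => (D ω, M ω, W ω)) inferInstance] =ᵐ[μ] 0) :
    μ[(fun ω => Y ω - q (D ω, X ω, W ω)) |
        MeasurableSpace.comap (fun ω => (D ω, Z ω, W ω)) inferInstance] =ᵐ[μ] 0 := by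
  have hYX : Measurable fun ω => (Y ω, X ω) := hYmeas.prodMk hX
  set mG := MeasurableSpace.comap (fun ω => (D ω, M ω, W ω)) inferInstance with hmGdef
  set mYX := MeasurableSpace.comap (fun ω => (Y ω, X ω)) inferInstance with hmYXdef
  have hmYXle : mYX ≤ mΩ := measurable_iff_comap_le.1 hYX
  set R := fun ω => Y ω - q (D ω, X ω, W ω) with hRdef
  have hRint : Integrable R μ := hY.sub hqInt
  -- measurability with respect to the sub-σ-algebras
  have hDMWc : Measurable[mG] fun ω => (D ω, M ω, W ω) := measurable_iff_comap_le.2 le_rfl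
  have hYXc : Measurable[mYX] fun ω => (Y ω, X ω) := measurable_iff_comap_le.2 le_rfl
  have hDG : Measurable[mG] D := measurable_fst.comp hDMWc
  have hWG : Measurable[mG] W := measurable_snd.comp (measurable_snd.comp hDMWc)
  have hRm2 : StronglyMeasurable[mYX ⊔ mG] R := by
    have hYXm2 : Measurable[mYX ⊔ mG] fun ω => (Y ω, X ω) := hYXc.mono le_sup_left le_rfl
    have hDMWm2 : Measurable[mYX ⊔ mG] fun ω => (D ω, M ω, W ω) := hDMWc.mono le_sup_right le_rfl
    have : Measurable[mYX ⊔ mG] R :=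
      (measurable_fst.comp hYXm2).sub (hq.comp
        ((measurable_fst.comp hDMWm2).prodMk
          ((measurable_snd.comp hYXm2).prodMk
            (measurable_snd.comp (measurable_snd.comp hDMWm2)))))
    exact this.stronglyMeasurable
  -- conditional independence in conditional-expectation form
  rw [condIndepFun_iff_condExp_inter_preimage_eq_mul hZ hYX] at hCI
  have hCI' : ∀ B : Set 𝓩, MeasurableSet B → ∀ t₁ : Set Ω, MeasurableSet[mYX] t₁ →
      (μ[(Z ⁻¹' B ∩ t₁).indicator (fun _ => (1:ℝ)) | mG]) =ᵐ[μ]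
        fun ω => (μ[(Z ⁻¹' B).indicator (fun _ => (1:ℝ)) | mG]) ω *
          (μ[t₁.indicator (fun _ => (1:ℝ)) | mG]) ω := by
    intro B hB t₁ ht₁
    rw [hmYXdef, MeasurableSpace.measurableSet_comap] at ht₁
    obtain ⟨t, ht, rfl⟩ := ht₁
    exact hCI B t hB ht
  have hkey : ∀ B : Set 𝓩, MeasurableSet B →
      (μ[(Z ⁻¹' B).indicator (fun _ => (1:ℝ)) -
        μ[(Z ⁻¹' B).indicator (fun _ => (1:ℝ))|mG] | mYX ⊔ mG]) =ᵐ[μ] 0 :=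
    fun B hB => BridgeAux.indicator_sub_condexp_sup_ae_zero (mΩ := mΩ) hDMW hmYXle hZ hCI' hB
  have hsection : ∀ B : Set 𝓩, MeasurableSet B → ∀ s : Set Ω, MeasurableSet[mG] s →
      ∫ ω in Z ⁻¹' B ∩ s, R ω ∂μ = 0 := fun B hB s hs =>
    BridgeAux.setIntegral_section_eq_zero (mΩ := mΩ) hDMW (sup_le hmYXle hDMW) le_sup_right hZ hB
      hRint hRm2 (hkey B hB) hBridge hs
  -- now conclude via the π-system of rectangles generating `σ(D, Z, W)`
  set φ := fun ω => (D ω, Z ω, W ω) with hφdef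
  set S : Set (Set (𝓓 × 𝓩 × 𝓦)) :=
    Set.image2 (· ×ˢ ·) {A : Set 𝓓 | MeasurableSet A}
      (Set.image2 (· ×ˢ ·) {B : Set 𝓩 | MeasurableSet B} {C : Set 𝓦 | MeasurableSet C})
    with hSdef
  have hSgen : (inferInstance : MeasurableSpace (𝓓 × 𝓩 × 𝓦)) = MeasurableSpace.generateFrom S := by
    rw [hSdef]
    exact (generateFrom_eq_prod generateFrom_measurableSet generateFrom_prod
      isCountablySpanning_measurableSet
      (isCountablySpanning_measurableSet.prod isCountablySpanning_measurableSet)).symm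
  have hNgen : MeasurableSpace.comap φ inferInstance
      = MeasurableSpace.generateFrom (Set.preimage φ '' S) := by
    rw [hSgen, MeasurableSpace.comap_generateFrom]
  have hpiS : IsPiSystem (Set.preimage φ '' S) := by
    have hS : IsPiSystem S :=
      isPiSystem_measurableSet.prod (isPiSystem_measurableSet.prod isPiSystem_measurableSet)
    exact hS.comap φ
  refine BridgeAux.condexp_ae_zero_of_forall_mem_pi hDZW hNgen hpiS hRint ?_ ?_
  · rintro u ⟨t, htS, rfl⟩
    rw [hSdef] at htS
    obtain ⟨A, hA, bc, ⟨Bz, hBz, Cw, hCw, rfl⟩, rfl⟩ := htS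
    have hset : φ ⁻¹' (A ×ˢ Bz ×ˢ Cw) = Z ⁻¹' Bz ∩ (D ⁻¹' A ∩ W ⁻¹' Cw) := by
      ext x
      simp only [hφdef, Set.mem_preimage, Set.mem_prod, Set.mem_inter_iff]
      tauto
    rw [hset]
    exact hsection Bz hBz _ ((hDG hA).inter (hWG hCw))
  · rw [← integral_condExp hDMW, integral_congr_ae hBridge]
    simp
end

section
/- Suppose h⋆ ∈ ℝ^{pX} and θ₀ ∈ ℝ satisfy the primal equation, γ⋆ ∈ ℝ^{pZ} satisfies the dual equation, and E[D·(D − ⟨γ⋆, Z⟩)] ≠ 0. Then for any θ ∈ ℝ, the moment restriction E[(Y − ⟨h⋆, X⟩ − D·θ)·(D − ⟨γ⋆, Z⟩)] = 0 holds if and only if θ = θ₀; in particular θ₀ = E[Y·(D − ⟨γ⋆, Z⟩)] / E[D·(D − ⟨γ⋆, Z⟩)], so the moment restriction uniquely identifies the controlled direct effect θ₀. -/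
open MeasureTheory

lemma aux_right {Ω : Type*} [MeasurableSpace Ω] (μ : Measure Ω) {n : ℕ}
    (f g : Ω → ℝ) (W : Ω → Fin n → ℝ) (c : Fin n → ℝ)
    (hfg : Integrable (fun ω => f ω * g ω) μ)
    (hfW : ∀ j, Integrable (fun ω => f ω * W ω j) μ) :
    Integrable (fun ω => f ω * (g ω - ∑ j, c j * W ω j)) μ ∧
    ∫ ω, f ω * (g ω - ∑ j, c j * W ω j) ∂μ
      = ∫ ω, f ω * g ω ∂μ - ∑ j, c j * ∫ ω, f ω * W ω j ∂μ := by
  have hpt : (fun ω => f ω * (g ω - ∑ j, c j * W ω j))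
      = fun ω => f ω * g ω - ∑ j, c j * (f ω * W ω j) := by
    funext ω
    have hs : f ω * ∑ j, c j * W ω j = ∑ j, c j * (f ω * W ω j) := by
      rw [Finset.mul_sum]; exact Finset.sum_congr rfl fun j _ => by ring
    rw [mul_sub, hs]
  have hsum : Integrable (fun ω => ∑ j, c j * (f ω * W ω j)) μ :=
    integrable_finset_sum _ fun j _ => (hfW j).const_mul (c j)
  constructor
  · rw [hpt]; exact hfg.sub hsum
  · rw [hpt, integral_sub hfg hsum, integral_finset_sum _ fun j _ => (hfW j).const_mul (c j)]
    simp_rw [integral_const_mul]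

lemma aux_left {Ω : Type*} [MeasurableSpace Ω] (μ : Measure Ω) {n : ℕ}
    (f g D' : Ω → ℝ) (W : Ω → Fin n → ℝ) (c : Fin n → ℝ) (θ : ℝ)
    (h1 : Integrable (fun ω => f ω * g ω) μ)
    (h2 : ∀ i, Integrable (fun ω => W ω i * g ω) μ)
    (h3 : Integrable (fun ω => D' ω * g ω) μ) :
    Integrable (fun ω => (f ω - (∑ i, c i * W ω i) - D' ω * θ) * g ω) μ ∧
    ∫ ω, (f ω - (∑ i, c i * W ω i) - D' ω * θ) * g ω ∂μ
      = ∫ ω, f ω * g ω ∂μ - (∑ i, c i * ∫ ω, W ω i * g ω ∂μ)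
        - θ * ∫ ω, D' ω * g ω ∂μ := by
  have hpt : (fun ω => (f ω - (∑ i, c i * W ω i) - D' ω * θ) * g ω)
      = fun ω => f ω * g ω - (∑ i, c i * (W ω i * g ω)) - θ * (D' ω * g ω) := by
    funext ω
    have hs : (∑ i, c i * W ω i) * g ω = ∑ i, c i * (W ω i * g ω) := by
      rw [Finset.sum_mul]; exact Finset.sum_congr rfl fun i _ => by ring
    rw [sub_mul, sub_mul, hs]; ring
  have hsum : Integrable (fun ω => ∑ i, c i * (W ω i * g ω)) μ :=
    integrable_finset_sum _ fun i _ => (h2 i).const_mul (c i)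
  have hA : Integrable (fun ω => f ω * g ω - ∑ i, c i * (W ω i * g ω)) μ := h1.sub hsum
  constructor
  · rw [hpt]; exact hA.sub (h3.const_mul θ)
  · rw [hpt, integral_sub hA (h3.const_mul θ), integral_sub h1 hsum,
      integral_finset_sum _ fun i _ => (h2 i).const_mul (c i), integral_const_mul]
    simp_rw [integral_const_mul]


/-- If `(h⋆, θ₀)` solves the primal equation, `γ⋆` solves the dual equation,
and `E[D·(D − ⟨γ⋆, Z⟩)] ≠ 0`, then the Neyman orthogonal moment restriction
`E[(Y − ⟨h⋆, X⟩ − D·θ)·(D − ⟨γ⋆, Z⟩)] = 0` holds iff `θ = θ₀`, and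
`θ₀ = E[Y·(D − ⟨γ⋆, Z⟩)] / E[D·(D − ⟨γ⋆, Z⟩)]`. -/
theorem moment_restriction_uniquely_identifies_theta
    {Ω : Type*} [MeasurableSpace Ω] (μ : Measure Ω) [IsProbabilityMeasure μ]
    {pZ pX : ℕ} (D Y : Ω → ℝ) (Z : Ω → Fin pZ → ℝ) (X : Ω → Fin pX → ℝ)
    -- square integrability
    (hD2 : MemLp D 2 μ) (hY2 : MemLp Y 2 μ)
    (hZ2 : ∀ j, MemLp (fun ω => Z ω j) 2 μ)
    (hX2 : ∀ i, MemLp (fun ω => X ω i) 2 μ)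
    -- all pairwise products are integrable
    (hYD : Integrable (fun ω => Y ω * D ω) μ)
    (hYZ : ∀ j, Integrable (fun ω => Y ω * Z ω j) μ)
    (hYX : ∀ i, Integrable (fun ω => Y ω * X ω i) μ)
    (hDD : Integrable (fun ω => D ω * D ω) μ)
    (hDZ : ∀ j, Integrable (fun ω => D ω * Z ω j) μ)
    (hDX : ∀ i, Integrable (fun ω => D ω * X ω i) μ)
    (hZZ : ∀ j k, Integrable (fun ω => Z ω j * Z ω k) μ)
    (hZX : ∀ j i, Integrable (fun ω => Z ω j * X ω i) μ)
    (hXX : ∀ i k, Integrable (fun ω => X ω i * X ω k) μ)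
    (hstar : Fin pX → ℝ) (θ₀ : ℝ) (γstar : Fin pZ → ℝ)
    -- the primal equation
    (hPrimalZ : ∀ j, ∫ ω, (Y ω - (∑ i, hstar i * X ω i) - D ω * θ₀) * Z ω j ∂μ = 0)
    (hPrimalD : ∫ ω, (Y ω - (∑ i, hstar i * X ω i) - D ω * θ₀) * D ω ∂μ = 0)
    -- the dual equation
    (hDual : ∀ i, ∫ ω, (D ω - ∑ j, γstar j * Z ω j) * X ω i ∂μ = 0)
    -- identification strength
    (hDenom : ∫ ω, D ω * (D ω - ∑ j, γstar j * Z ω j) ∂μ ≠ 0) :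
    (∀ θ : ℝ,
      (∫ ω, (Y ω - (∑ i, hstar i * X ω i) - D ω * θ) *
          (D ω - ∑ j, γstar j * Z ω j) ∂μ = 0) ↔ θ = θ₀) ∧
    θ₀ = (∫ ω, Y ω * (D ω - ∑ j, γstar j * Z ω j) ∂μ) /
          (∫ ω, D ω * (D ω - ∑ j, γstar j * Z ω j) ∂μ) := by
  have hXD : ∀ i, Integrable (fun ω => X ω i * D ω) μ := fun i => by
    simpa [mul_comm] using hDX i
  have hXZ : ∀ i j, Integrable (fun ω => X ω i * Z ω j) μ := fun i j => by
    simpa [mul_comm] using hZX j i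
  -- decomposition of R_θ against D and Z j
  have hRD := fun θ : ℝ => aux_left μ Y D D X hstar θ hYD hXD hDD
  have hRZ := fun (θ : ℝ) (j : Fin pZ) =>
    aux_left μ Y (fun ω => Z ω j) D X hstar θ (hYZ j) (fun i => hXZ i j) (hDZ j)
  -- denominator expansion
  have hDT := aux_right μ D D Z γstar hDD hDZ
  have hYT := aux_right μ Y D Z γstar hYD hYZ
  have hXT := fun i => aux_right μ (fun ω => X ω i) D Z γstar (hXD i) (fun j => hXZ i j)
  -- primal at θ₀ expanded
  have eqD : ∫ ω, Y ω * D ω ∂μ - (∑ i, hstar i * ∫ ω, X ω i * D ω ∂μ)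
      - θ₀ * ∫ ω, D ω * D ω ∂μ = 0 := by rw [← (hRD θ₀).2]; exact hPrimalD
  have eqZ : ∀ j, ∫ ω, Y ω * Z ω j ∂μ - (∑ i, hstar i * ∫ ω, X ω i * Z ω j ∂μ)
      - θ₀ * ∫ ω, D ω * Z ω j ∂μ = 0 := fun j => by
    rw [← (hRZ θ₀ j).2]; exact hPrimalZ j
  -- key: moment = (θ₀ - θ) * denom
  have key : ∀ θ : ℝ,
      ∫ ω, (Y ω - (∑ i, hstar i * X ω i) - D ω * θ) *
          (D ω - ∑ j, γstar j * Z ω j) ∂μ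
        = (θ₀ - θ) * ∫ ω, D ω * (D ω - ∑ j, γstar j * Z ω j) ∂μ := by
    intro θ
    have h := aux_right μ (fun ω => Y ω - (∑ i, hstar i * X ω i) - D ω * θ) D Z γstar
      (hRD θ).1 (fun j => (hRZ θ j).1)
    rw [h.2, (hRD θ).2, hDT.2]
    have hz : ∀ j, ∫ ω, (Y ω - (∑ i, hstar i * X ω i) - D ω * θ) * Z ω j ∂μ
        = (θ₀ - θ) * ∫ ω, D ω * Z ω j ∂μ := fun j => by
      rw [(hRZ θ j).2]; have := eqZ j; ring_nf; linarith [eqZ j]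
    simp_rw [hz]
    have hsum : ∑ j, γstar j * ((θ₀ - θ) * ∫ ω, D ω * Z ω j ∂μ)
        = (θ₀ - θ) * ∑ j, γstar j * ∫ ω, D ω * Z ω j ∂μ := by
      rw [Finset.mul_sum]; exact Finset.sum_congr rfl fun j _ => by ring
    rw [hsum]
    have := eqD
    ring_nf at this ⊢
    linarith [eqD]
  constructor
  · intro θ
    rw [key θ]
    constructor
    · intro h
      rcases mul_eq_zero.mp h with h' | h'
      · linarith [h']
      · exact absurd h' hDenom
    · intro h; rw [h]; ring
  · -- θ₀ formula
    have hXT0 : ∀ i, ∫ ω, X ω i * (D ω - ∑ j, γstar j * Z ω j) ∂μ = 0 := fun i => by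
      rw [← hDual i]; congr 1; funext ω; ring
    have h := aux_left μ Y (fun ω => D ω - ∑ j, γstar j * Z ω j) D X hstar θ₀
      hYT.1 (fun i => (hXT i).1) hDT.1
    have h0 := key θ₀
    rw [h.2] at h0
    simp_rw [hXT0, mul_zero, Finset.sum_const_zero, sub_zero] at h0
    have : ∫ ω, Y ω * (D ω - ∑ j, γstar j * Z ω j) ∂μ
        = θ₀ * ∫ ω, D ω * (D ω - ∑ j, γstar j * Z ω j) ∂μ := by linarith [h0]
    rw [this]
    field_simp
end

section
/- Suppose (h₀, θ₀) ∈ ℝ^{pX} × ℝ and (h₁, θ₁) ∈ ℝ^{pX} × ℝ both satisfy the primal equation, and suppose there exists γ⋆ ∈ ℝ^{pZ} satisfying the dual equation with E[D·(D − ⟨γ⋆, Z⟩)] ≠ 0. Then θ₀ = θ₁; that is, the direct-effect coordinate of any solution to the primal equation is unique even when the nuisance coordinate h is not unique. -/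
open MeasureTheory

/-- If `(h₀, θ₀)` and `(h₁, θ₁)` both satisfy the primal equation, and there
is a solution `γ⋆` to the dual equation with `E[D·(D − ⟨γ⋆, Z⟩)] ≠ 0`, then `θ₀ = θ₁`:
the direct-effect coordinate of the primal solution is unique even if `h` is not. -/
theorem primal_direct_effect_coordinate_unique
    {Ω : Type*} [MeasurableSpace Ω] (μ : Measure Ω) [IsProbabilityMeasure μ]
    {pZ pX : ℕ} (D Y : Ω → ℝ) (Z : Ω → Fin pZ → ℝ) (X : Ω → Fin pX → ℝ)
    -- square integrability
    (hD2 : MemLp D 2 μ) (hY2 : MemLp Y 2 μ)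
    (hZ2 : ∀ j, MemLp (fun ω => Z ω j) 2 μ)
    (hX2 : ∀ i, MemLp (fun ω => X ω i) 2 μ)
    -- all pairwise products are integrable
    (hYD : Integrable (fun ω => Y ω * D ω) μ)
    (hYZ : ∀ j, Integrable (fun ω => Y ω * Z ω j) μ)
    (hYX : ∀ i, Integrable (fun ω => Y ω * X ω i) μ)
    (hDD : Integrable (fun ω => D ω * D ω) μ)
    (hDZ : ∀ j, Integrable (fun ω => D ω * Z ω j) μ)
    (hDX : ∀ i, Integrable (fun ω => D ω * X ω i) μ)
    (hZZ : ∀ j k, Integrable (fun ω => Z ω j * Z ω k) μ)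
    (hZX : ∀ j i, Integrable (fun ω => Z ω j * X ω i) μ)
    (hXX : ∀ i k, Integrable (fun ω => X ω i * X ω k) μ)
    (h₀ h₁ : Fin pX → ℝ) (θ₀ θ₁ : ℝ) (γstar : Fin pZ → ℝ)
    -- `(h₀, θ₀)` satisfies the primal equation
    (hPrimalZ₀ : ∀ j, ∫ ω, (Y ω - (∑ i, h₀ i * X ω i) - D ω * θ₀) * Z ω j ∂μ = 0)
    (hPrimalD₀ : ∫ ω, (Y ω - (∑ i, h₀ i * X ω i) - D ω * θ₀) * D ω ∂μ = 0)
    -- `(h₁, θ₁)` satisfies the primal equation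
    (hPrimalZ₁ : ∀ j, ∫ ω, (Y ω - (∑ i, h₁ i * X ω i) - D ω * θ₁) * Z ω j ∂μ = 0)
    (hPrimalD₁ : ∫ ω, (Y ω - (∑ i, h₁ i * X ω i) - D ω * θ₁) * D ω ∂μ = 0)
    -- `γ⋆` satisfies the dual equation
    (hDual : ∀ i, ∫ ω, (D ω - ∑ j, γstar j * Z ω j) * X ω i ∂μ = 0)
    -- identification strength
    (hDenom : ∫ ω, D ω * (D ω - ∑ j, γstar j * Z ω j) ∂μ ≠ 0) :
    θ₀ = θ₁ := by

  classical
  set g : Fin pX → ℝ := fun i => h₁ i - h₀ i with hg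
  set δ : ℝ := θ₁ - θ₀ with hδ
  have hXZ : ∀ i j, Integrable (fun ω => X ω i * Z ω j) μ := by
    intro i j; simpa [mul_comm] using hZX j i
  have hXD : ∀ i, Integrable (fun ω => X ω i * D ω) μ := by
    intro i; simpa [mul_comm] using hDX i
  -- pointwise identity for the difference of residuals
  have hW : ∀ ω, (∑ i, g i * X ω i) + D ω * δ =
      (Y ω - (∑ i, h₀ i * X ω i) - D ω * θ₀) - (Y ω - (∑ i, h₁ i * X ω i) - D ω * θ₁) := by
    intro ω
    simp only [hg, hδ, sub_mul, Finset.sum_sub_distrib]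
    ring
  -- integrability of residual * Z and residual * D
  have intResZ : ∀ (h : Fin pX → ℝ) (θ : ℝ) (j : Fin pZ),
      Integrable (fun ω => (Y ω - (∑ i, h i * X ω i) - D ω * θ) * Z ω j) μ := by
    intro h θ j
    have he : (fun ω => (Y ω - (∑ i, h i * X ω i) - D ω * θ) * Z ω j)
        = fun ω => Y ω * Z ω j - (∑ i, h i * (X ω i * Z ω j)) - θ * (D ω * Z ω j) := by
      funext ω
      have : (∑ i, h i * (X ω i * Z ω j)) = (∑ i, h i * X ω i) * Z ω j := by
        rw [Finset.sum_mul]; exact Finset.sum_congr rfl fun i _ => by ring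
      rw [this]; ring
    rw [he]
    exact ((hYZ j).sub (integrable_finset_sum _ fun i _ => ((hXZ i j).const_mul _))).sub
      ((hDZ j).const_mul _)
  have intResD : ∀ (h : Fin pX → ℝ) (θ : ℝ),
      Integrable (fun ω => (Y ω - (∑ i, h i * X ω i) - D ω * θ) * D ω) μ := by
    intro h θ
    have he : (fun ω => (Y ω - (∑ i, h i * X ω i) - D ω * θ) * D ω)
        = fun ω => Y ω * D ω - (∑ i, h i * (X ω i * D ω)) - θ * (D ω * D ω) := by
      funext ω
      have : (∑ i, h i * (X ω i * D ω)) = (∑ i, h i * X ω i) * D ω := by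
        rw [Finset.sum_mul]; exact Finset.sum_congr rfl fun i _ => by ring
      rw [this]; ring
    rw [he]
    exact (hYD.sub (integrable_finset_sum _ fun i _ => ((hXD i).const_mul _))).sub
      (hDD.const_mul _)
  -- ∫ W * Z j = 0
  have WZ : ∀ j, ∫ ω, ((∑ i, g i * X ω i) + D ω * δ) * Z ω j ∂μ = 0 := by
    intro j
    have he : (fun ω => ((∑ i, g i * X ω i) + D ω * δ) * Z ω j)
        = fun ω => (Y ω - (∑ i, h₀ i * X ω i) - D ω * θ₀) * Z ω j
            - (Y ω - (∑ i, h₁ i * X ω i) - D ω * θ₁) * Z ω j := by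
      funext ω; rw [← sub_mul, ← hW ω]
    rw [he, integral_sub (intResZ h₀ θ₀ j) (intResZ h₁ θ₁ j), hPrimalZ₀ j, hPrimalZ₁ j, sub_zero]
  have WD : ∫ ω, ((∑ i, g i * X ω i) + D ω * δ) * D ω ∂μ = 0 := by
    have he : (fun ω => ((∑ i, g i * X ω i) + D ω * δ) * D ω)
        = fun ω => (Y ω - (∑ i, h₀ i * X ω i) - D ω * θ₀) * D ω
            - (Y ω - (∑ i, h₁ i * X ω i) - D ω * θ₁) * D ω := by
      funext ω; rw [← sub_mul, ← hW ω]
    rw [he, integral_sub (intResD h₀ θ₀) (intResD h₁ θ₁), hPrimalD₀, hPrimalD₁, sub_zero]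
  -- integrability of W * Z j and W * D
  have intWZ : ∀ j, Integrable (fun ω => ((∑ i, g i * X ω i) + D ω * δ) * Z ω j) μ := by
    intro j
    have he : (fun ω => ((∑ i, g i * X ω i) + D ω * δ) * Z ω j)
        = fun ω => (∑ i, g i * (X ω i * Z ω j)) + δ * (D ω * Z ω j) := by
      funext ω
      have : (∑ i, g i * (X ω i * Z ω j)) = (∑ i, g i * X ω i) * Z ω j := by
        rw [Finset.sum_mul]; exact Finset.sum_congr rfl fun i _ => by ring
      rw [this]; ring
    rw [he]
    exact (integrable_finset_sum _ fun i _ => ((hXZ i j).const_mul _)).add ((hDZ j).const_mul _)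
  have intWD : Integrable (fun ω => ((∑ i, g i * X ω i) + D ω * δ) * D ω) μ := by
    have he : (fun ω => ((∑ i, g i * X ω i) + D ω * δ) * D ω)
        = fun ω => (∑ i, g i * (X ω i * D ω)) + δ * (D ω * D ω) := by
      funext ω
      have : (∑ i, g i * (X ω i * D ω)) = (∑ i, g i * X ω i) * D ω := by
        rw [Finset.sum_mul]; exact Finset.sum_congr rfl fun i _ => by ring
      rw [this]; ring
    rw [he]
    exact (integrable_finset_sum _ fun i _ => ((hXD i).const_mul _)).add (hDD.const_mul _)
  -- integrability of X i * Q and D * Q, where Q = D - γ·Z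
  have intXQ : ∀ i, Integrable (fun ω => X ω i * (D ω - ∑ j, γstar j * Z ω j)) μ := by
    intro i
    have he : (fun ω => X ω i * (D ω - ∑ j, γstar j * Z ω j))
        = fun ω => X ω i * D ω - (∑ j, γstar j * (X ω i * Z ω j)) := by
      funext ω
      rw [mul_sub, Finset.mul_sum]
      congr 1
      exact Finset.sum_congr rfl fun j _ => by ring
    rw [he]
    exact (hXD i).sub (integrable_finset_sum _ fun j _ => ((hXZ i j).const_mul _))
  have intDQ : Integrable (fun ω => D ω * (D ω - ∑ j, γstar j * Z ω j)) μ := by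
    have he : (fun ω => D ω * (D ω - ∑ j, γstar j * Z ω j))
        = fun ω => D ω * D ω - (∑ j, γstar j * (D ω * Z ω j)) := by
      funext ω
      rw [mul_sub, Finset.mul_sum]
      congr 1
      exact Finset.sum_congr rfl fun j _ => by ring
    rw [he]
    exact hDD.sub (integrable_finset_sum _ fun j _ => ((hDZ j).const_mul _))
  -- ∫ X i * Q = 0 from the dual equation
  have XQ : ∀ i, ∫ ω, X ω i * (D ω - ∑ j, γstar j * Z ω j) ∂μ = 0 := by
    intro i
    have := hDual i
    simpa [mul_comm] using this
  -- step 1: ∫ W * Q = 0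
  have step1 : ∫ ω, ((∑ i, g i * X ω i) + D ω * δ) * (D ω - ∑ j, γstar j * Z ω j) ∂μ = 0 := by
    have he : (fun ω => ((∑ i, g i * X ω i) + D ω * δ) * (D ω - ∑ j, γstar j * Z ω j))
        = fun ω => ((∑ i, g i * X ω i) + D ω * δ) * D ω
            - (∑ j, γstar j * (((∑ i, g i * X ω i) + D ω * δ) * Z ω j)) := by
      funext ω
      rw [mul_sub, Finset.mul_sum]
      congr 1
      exact Finset.sum_congr rfl fun j _ => by ring
    rw [he, integral_sub intWD (integrable_finset_sum _ fun j _ => ((intWZ j).const_mul _)),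
      integral_finset_sum]
    · rw [WD]
      simp only [integral_const_mul]
      simp [fun j => WZ j]
    · exact fun j _ => (intWZ j).const_mul _
  -- step 2: ∫ W * Q = δ * ∫ D * Q
  have step2 : ∫ ω, ((∑ i, g i * X ω i) + D ω * δ) * (D ω - ∑ j, γstar j * Z ω j) ∂μ
      = δ * ∫ ω, D ω * (D ω - ∑ j, γstar j * Z ω j) ∂μ := by
    have he : (fun ω => ((∑ i, g i * X ω i) + D ω * δ) * (D ω - ∑ j, γstar j * Z ω j))
        = fun ω => (∑ i, g i * (X ω i * (D ω - ∑ j, γstar j * Z ω j)))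
            + δ * (D ω * (D ω - ∑ j, γstar j * Z ω j)) := by
      funext ω
      have : (∑ i, g i * (X ω i * (D ω - ∑ j, γstar j * Z ω j)))
          = (∑ i, g i * X ω i) * (D ω - ∑ j, γstar j * Z ω j) := by
        rw [Finset.sum_mul]; exact Finset.sum_congr rfl fun i _ => by ring
      rw [this]; ring
    rw [he, integral_add (integrable_finset_sum _ fun i _ => ((intXQ i).const_mul _))
      (intDQ.const_mul _), integral_finset_sum _ (fun i _ => (intXQ i).const_mul _),
      integral_const_mul]
    simp only [integral_const_mul]
    simp [fun i => XQ i]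
  have : δ = 0 := by
    have := step1
    rw [step2] at this
    exact (mul_eq_zero.mp this).resolve_right hDenom
  have : θ₁ - θ₀ = 0 := by rwa [hδ] at this
  linarith
end

section
/- Suppose γ⋆ ∈ ℝ^{pZ} satisfies the dual equation. Then for every h⋆ ∈ ℝ^{pX}, every θ ∈ ℝ, and every direction ν ∈ ℝ^{pX}, the map τ ↦ E[(Y − ⟨h⋆ + τ·ν, X⟩ − D·θ)·(D − ⟨γ⋆, Z⟩)] from ℝ to ℝ has derivative equal to 0 at τ = 0; that is, the final moment restriction is Neyman orthogonal with respect to the nuisance parameter h. -/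
open MeasureTheory

/-- If `γ⋆` satisfies the dual equation, then the final moment restriction is
Neyman orthogonal with respect to the nuisance parameter `h`: for every `h⋆`, `θ` and every
direction `ν`, the map `τ ↦ E[(Y − ⟨h⋆ + τ·ν, X⟩ − D·θ)·(D − ⟨γ⋆, Z⟩)]` has derivative `0`
at `τ = 0`. -/
theorem neyman_orthogonality_in_h
    {Ω : Type*} [MeasurableSpace Ω] (μ : Measure Ω) [IsProbabilityMeasure μ]
    {pZ pX : ℕ} (D Y : Ω → ℝ) (Z : Ω → Fin pZ → ℝ) (X : Ω → Fin pX → ℝ)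
    -- square integrability
    (hD2 : MemLp D 2 μ) (hY2 : MemLp Y 2 μ)
    (hZ2 : ∀ j, MemLp (fun ω => Z ω j) 2 μ)
    (hX2 : ∀ i, MemLp (fun ω => X ω i) 2 μ)
    -- all pairwise products are integrable
    (hYD : Integrable (fun ω => Y ω * D ω) μ)
    (hYZ : ∀ j, Integrable (fun ω => Y ω * Z ω j) μ)
    (hYX : ∀ i, Integrable (fun ω => Y ω * X ω i) μ)
    (hDD : Integrable (fun ω => D ω * D ω) μ)
    (hDZ : ∀ j, Integrable (fun ω => D ω * Z ω j) μ)
    (hDX : ∀ i, Integrable (fun ω => D ω * X ω i) μ)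
    (hZZ : ∀ j k, Integrable (fun ω => Z ω j * Z ω k) μ)
    (hZX : ∀ j i, Integrable (fun ω => Z ω j * X ω i) μ)
    (hXX : ∀ i k, Integrable (fun ω => X ω i * X ω k) μ)
    (γstar : Fin pZ → ℝ)
    -- `γ⋆` satisfies the dual equation
    (hDual : ∀ i, ∫ ω, (D ω - ∑ j, γstar j * Z ω j) * X ω i ∂μ = 0) :
    ∀ (hstar : Fin pX → ℝ) (θ : ℝ) (ν : Fin pX → ℝ),
      HasDerivAt
        (fun τ : ℝ => ∫ ω, (Y ω - (∑ i, (hstar i + τ * ν i) * X ω i) - D ω * θ) *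
          (D ω - ∑ j, γstar j * Z ω j) ∂μ)
        0 0 := by
  intro hstar θ ν
  set g : Ω → ℝ := fun ω => D ω - ∑ j, γstar j * Z ω j with hgdef
  -- generic integrability of `a * g`
  have hag : ∀ (a : Ω → ℝ), Integrable (fun ω => a ω * D ω) μ →
      (∀ j, Integrable (fun ω => a ω * Z ω j) μ) →
      Integrable (fun ω => a ω * g ω) μ := by
    intro a haD haZ
    have h2 : Integrable (fun ω => ∑ j, γstar j * (a ω * Z ω j)) μ :=
      integrable_finset_sum _ fun j _ => (haZ j).const_mul _
    have heq : (fun ω => a ω * g ω)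
        = fun ω => a ω * D ω - ∑ j, γstar j * (a ω * Z ω j) := by
      funext ω
      rw [hgdef, mul_sub, Finset.mul_sum]
      congr 1
      exact Finset.sum_congr rfl fun j _ => by ring
    rw [heq]
    exact haD.sub h2
  have hgY : Integrable (fun ω => Y ω * g ω) μ := hag Y hYD hYZ
  have hgD : Integrable (fun ω => D ω * g ω) μ := hag D hDD hDZ
  have hgX : ∀ i, Integrable (fun ω => X ω i * g ω) μ := by
    intro i
    refine hag (fun ω => X ω i) ?_ ?_
    · simpa [mul_comm] using hDX i
    · intro j; simpa [mul_comm] using hZX j i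
  -- ∫ X i * g = 0
  have hXg0 : ∀ i, ∫ ω, X ω i * g ω ∂μ = 0 := by
    intro i
    have h := hDual i
    rw [show (fun ω => X ω i * g ω) = fun ω => (D ω - ∑ j, γstar j * Z ω j) * X ω i from
      funext fun ω => mul_comm _ _]
    exact h
  -- integrability of the base integrand and of the directional term
  have hf0 : Integrable (fun ω => (Y ω - ∑ i, hstar i * X ω i - D ω * θ) * g ω) μ := by
    have heq : (fun ω => (Y ω - ∑ i, hstar i * X ω i - D ω * θ) * g ω)
        = fun ω => Y ω * g ω - ∑ i, hstar i * (X ω i * g ω) - θ * (D ω * g ω) := by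
      funext ω
      rw [sub_mul, sub_mul, Finset.sum_mul]
      have : ∑ i, hstar i * X ω i * g ω = ∑ i, hstar i * (X ω i * g ω) :=
        Finset.sum_congr rfl fun i _ => by ring
      rw [this]; ring
    rw [heq]
    exact (hgY.sub (integrable_finset_sum _ fun i _ => (hgX i).const_mul _)).sub
      (hgD.const_mul θ)
  have hSν : Integrable (fun ω => (∑ i, ν i * X ω i) * g ω) μ := by
    have heq : (fun ω => (∑ i, ν i * X ω i) * g ω)
        = fun ω => ∑ i, ν i * (X ω i * g ω) := by
      funext ω
      rw [Finset.sum_mul]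
      exact Finset.sum_congr rfl fun i _ => by ring
    rw [heq]
    exact integrable_finset_sum _ fun i _ => (hgX i).const_mul _
  have hSν0 : ∫ ω, (∑ i, ν i * X ω i) * g ω ∂μ = 0 := by
    have heq : (fun ω => (∑ i, ν i * X ω i) * g ω)
        = fun ω => ∑ i, ν i * (X ω i * g ω) := by
      funext ω
      rw [Finset.sum_mul]
      exact Finset.sum_congr rfl fun i _ => by ring
    rw [heq, integral_finset_sum _ fun i _ => (hgX i).const_mul _]
    simp [integral_const_mul, hXg0]
  -- the map is constant in τ
  have hconst : (fun τ : ℝ => ∫ ω, (Y ω - (∑ i, (hstar i + τ * ν i) * X ω i) - D ω * θ) *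
        (D ω - ∑ j, γstar j * Z ω j) ∂μ)
      = fun _ : ℝ => ∫ ω, (Y ω - ∑ i, hstar i * X ω i - D ω * θ) * g ω ∂μ := by
    funext τ
    have heq : (fun ω => (Y ω - (∑ i, (hstar i + τ * ν i) * X ω i) - D ω * θ) *
          (D ω - ∑ j, γstar j * Z ω j))
        = fun ω => (Y ω - ∑ i, hstar i * X ω i - D ω * θ) * g ω
            - τ * ((∑ i, ν i * X ω i) * g ω) := by
      funext ω
      have hs : (∑ i, (hstar i + τ * ν i) * X ω i)
          = ∑ i, hstar i * X ω i + τ * ∑ i, ν i * X ω i := by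
        rw [Finset.mul_sum, ← Finset.sum_add_distrib]
        exact Finset.sum_congr rfl fun i _ => by ring
      rw [hs, hgdef]; ring
    rw [heq, integral_sub hf0 (hSν.const_mul τ), integral_const_mul, hSν0]
    ring
  rw [hconst]
  exact hasDerivAt_const _ _
end

section
/- Suppose (h⋆, θ₀) ∈ ℝ^{pX} × ℝ satisfies the primal equation. Then for every γ⋆ ∈ ℝ^{pZ} and every direction ν ∈ ℝ^{pZ}, the map τ ↦ E[(Y − ⟨h⋆, X⟩ − D·θ₀)·(D − ⟨γ⋆ + τ·ν, Z⟩)] from ℝ to ℝ has derivative equal to 0 at τ = 0; that is, the final moment restriction is Neyman orthogonal with respect to the nuisance parameter γ. -/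
open MeasureTheory

/-- If `(h⋆, θ₀)` satisfies the primal equation, then the final moment
restriction is Neyman orthogonal with respect to the nuisance parameter `γ`: for every `γ⋆`
and every direction `ν`, the map `τ ↦ E[(Y − ⟨h⋆, X⟩ − D·θ₀)·(D − ⟨γ⋆ + τ·ν, Z⟩)]` has
derivative `0` at `τ = 0`. -/
theorem neyman_orthogonality_in_gamma
    {Ω : Type*} [MeasurableSpace Ω] (μ : Measure Ω) [IsProbabilityMeasure μ]
    {pZ pX : ℕ} (D Y : Ω → ℝ) (Z : Ω → Fin pZ → ℝ) (X : Ω → Fin pX → ℝ)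
    -- square integrability
    (hD2 : MemLp D 2 μ) (hY2 : MemLp Y 2 μ)
    (hZ2 : ∀ j, MemLp (fun ω => Z ω j) 2 μ)
    (hX2 : ∀ i, MemLp (fun ω => X ω i) 2 μ)
    -- all pairwise products are integrable
    (hYD : Integrable (fun ω => Y ω * D ω) μ)
    (hYZ : ∀ j, Integrable (fun ω => Y ω * Z ω j) μ)
    (hYX : ∀ i, Integrable (fun ω => Y ω * X ω i) μ)
    (hDD : Integrable (fun ω => D ω * D ω) μ)
    (hDZ : ∀ j, Integrable (fun ω => D ω * Z ω j) μ)
    (hDX : ∀ i, Integrable (fun ω => D ω * X ω i) μ)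
    (hZZ : ∀ j k, Integrable (fun ω => Z ω j * Z ω k) μ)
    (hZX : ∀ j i, Integrable (fun ω => Z ω j * X ω i) μ)
    (hXX : ∀ i k, Integrable (fun ω => X ω i * X ω k) μ)
    (hstar : Fin pX → ℝ) (θ₀ : ℝ)
    -- `(h⋆, θ₀)` satisfies the primal equation
    (hPrimalZ : ∀ j, ∫ ω, (Y ω - (∑ i, hstar i * X ω i) - D ω * θ₀) * Z ω j ∂μ = 0)
    (hPrimalD : ∫ ω, (Y ω - (∑ i, hstar i * X ω i) - D ω * θ₀) * D ω ∂μ = 0) :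
    ∀ (γstar : Fin pZ → ℝ) (ν : Fin pZ → ℝ),
      HasDerivAt
        (fun τ : ℝ => ∫ ω, (Y ω - (∑ i, hstar i * X ω i) - D ω * θ₀) *
          (D ω - ∑ j, (γstar j + τ * ν j) * Z ω j) ∂μ)
        0 0 := by
  intro γstar ν
  set R : Ω → ℝ := fun ω => Y ω - (∑ i, hstar i * X ω i) - D ω * θ₀ with hRdef
  have hRZ : ∀ j, Integrable (fun ω => R ω * Z ω j) μ := by
    intro j
    have h1 : Integrable (fun ω => ∑ i, hstar i * X ω i * Z ω j) μ := by
      apply integrable_finset_sum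
      intro i _
      exact ((hZX j i).const_mul (hstar i)).congr (Filter.Eventually.of_forall fun ω => by ring)
    have heq : (fun ω => R ω * Z ω j)
        = fun ω => Y ω * Z ω j - (∑ i, hstar i * X ω i * Z ω j) - θ₀ * (D ω * Z ω j) := by
      funext ω
      simp only [hRdef]
      rw [sub_mul, sub_mul, Finset.sum_mul]
      ring_nf
    rw [heq]
    exact ((hYZ j).sub h1).sub ((hDZ j).const_mul θ₀)
  have hRD : Integrable (fun ω => R ω * D ω) μ := by
    have h1 : Integrable (fun ω => ∑ i, hstar i * X ω i * D ω) μ := by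
      apply integrable_finset_sum
      intro i _
      exact ((hDX i).const_mul (hstar i)).congr (Filter.Eventually.of_forall fun ω => by ring)
    have heq : (fun ω => R ω * D ω)
        = fun ω => Y ω * D ω - (∑ i, hstar i * X ω i * D ω) - θ₀ * (D ω * D ω) := by
      funext ω
      simp only [hRdef]
      rw [sub_mul, sub_mul, Finset.sum_mul]
      ring_nf
    rw [heq]
    exact (hYD.sub h1).sub (hDD.const_mul θ₀)
  have key : (fun τ : ℝ => ∫ ω, R ω * (D ω - ∑ j, (γstar j + τ * ν j) * Z ω j) ∂μ)
      = fun _ : ℝ => ∫ ω, R ω * D ω ∂μ := by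
    funext τ
    have heq : (fun ω => R ω * (D ω - ∑ j, (γstar j + τ * ν j) * Z ω j))
        = fun ω => R ω * D ω - ∑ j, (γstar j + τ * ν j) * (R ω * Z ω j) := by
      funext ω
      rw [mul_sub, Finset.mul_sum]
      congr 1
      exact Finset.sum_congr rfl fun j _ => by ring
    rw [heq, integral_sub hRD (integrable_finset_sum _ fun j _ => (hRZ j).const_mul _),
      integral_finset_sum]
    · have : ∀ j ∈ Finset.univ, (∫ ω, (γstar j + τ * ν j) * (R ω * Z ω j) ∂μ) = 0 := by
        intro j _
        rw [integral_const_mul]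
        have := hPrimalZ j
        simp only [hRdef] at this ⊢
        rw [this, mul_zero]
      rw [Finset.sum_congr rfl this, Finset.sum_const, smul_zero, sub_zero]
    · exact fun j _ => (hRZ j).const_mul _
  rw [key]
  exact hasDerivAt_const 0 _
end

section
/- Let (Ω, 𝓕, μ) be a probability space and let D : Ω → ℝ, M : Ω → ℝ^{pM}, Z : Ω → ℝ^{pZ}, X : Ω → ℝ^{pX} be square-integrable random variables with all pairwise products integrable. Let F be a real pX × pM matrix and suppose the cross-moment factorizations E[X·Zᵀ] = F·E[M·Zᵀ] and E[X·D] = F·E[M·D] hold (entrywise), as implied by the partially linear specification E[X | M, W] = F·M. If the pM × pZ matrix E[M·Zᵀ] has full row rank pM, then there exists γ⋆ ∈ ℝ^{pZ} solving the dual equation: E[(D − ⟨γ⋆, Z⟩)·X_i] = 0 for every coordinate i. -/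
open MeasureTheory

/-- **existence of a dual solution.** If the cross moments factorize through
the mediator, `E[X·Zᵀ] = F·E[M·Zᵀ]` and `E[X·D] = F·E[M·D]`, and the matrix `E[M·Zᵀ]` has
full row rank `pM`, then there is a solution `γ⋆` of the dual equation
`E[(D − ⟨γ⋆, Z⟩)·X_i] = 0` for every coordinate `i`. -/
theorem dual_solution_exists
    {Ω : Type*} [MeasurableSpace Ω] (μ : Measure Ω) [IsProbabilityMeasure μ]
    {pM pZ pX : ℕ}
    (D : Ω → ℝ) (M : Ω → Fin pM → ℝ) (Z : Ω → Fin pZ → ℝ) (X : Ω → Fin pX → ℝ)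
    -- square integrability
    (hD2 : MemLp D 2 μ)
    (hM2 : ∀ k, MemLp (fun ω => M ω k) 2 μ)
    (hZ2 : ∀ j, MemLp (fun ω => Z ω j) 2 μ)
    (hX2 : ∀ i, MemLp (fun ω => X ω i) 2 μ)
    -- all pairwise products are integrable
    (hDD : Integrable (fun ω => D ω * D ω) μ)
    (hDM : ∀ k, Integrable (fun ω => D ω * M ω k) μ)
    (hDZ : ∀ j, Integrable (fun ω => D ω * Z ω j) μ)
    (hDX : ∀ i, Integrable (fun ω => D ω * X ω i) μ)
    (hMM : ∀ k l, Integrable (fun ω => M ω k * M ω l) μ)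
    (hMZ : ∀ k j, Integrable (fun ω => M ω k * Z ω j) μ)
    (hMX : ∀ k i, Integrable (fun ω => M ω k * X ω i) μ)
    (hZZ : ∀ j l, Integrable (fun ω => Z ω j * Z ω l) μ)
    (hZX : ∀ j i, Integrable (fun ω => Z ω j * X ω i) μ)
    (hXX : ∀ i l, Integrable (fun ω => X ω i * X ω l) μ)
    (F : Matrix (Fin pX) (Fin pM) ℝ)
    -- cross-moment factorizations implied by `E[X | M, W] = F·M`
    (hXZ : ∀ i j, ∫ ω, X ω i * Z ω j ∂μ = ∑ k, F i k * ∫ ω, M ω k * Z ω j ∂μ)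
    (hXD : ∀ i, ∫ ω, X ω i * D ω ∂μ = ∑ k, F i k * ∫ ω, M ω k * D ω ∂μ)
    -- `E[M·Zᵀ]` has full row rank
    (hrank : (Matrix.of fun (k : Fin pM) (j : Fin pZ) => ∫ ω, M ω k * Z ω j ∂μ).rank = pM) :
    ∃ γstar : Fin pZ → ℝ, ∀ i, ∫ ω, (D ω - ∑ j, γstar j * Z ω j) * X ω i ∂μ = 0 := by
  set A : Matrix (Fin pM) (Fin pZ) ℝ :=
    Matrix.of fun (k : Fin pM) (j : Fin pZ) => ∫ ω, M ω k * Z ω j ∂μ with hA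
  -- full row rank ⇒ mulVec is surjective
  have hsurj : Function.Surjective A.mulVec := by
    have htop : LinearMap.range A.mulVecLin = ⊤ := by
      apply Submodule.eq_top_of_finrank_eq
      rw [← Matrix.rank, hrank, Module.finrank_pi]
      simp
    intro b
    have := htop ▸ Submodule.mem_top (x := b) (R := ℝ)
    obtain ⟨γ, hγ⟩ := this
    exact ⟨γ, hγ⟩
  obtain ⟨γ, hγ⟩ := hsurj (fun k => ∫ ω, M ω k * D ω ∂μ)
  refine ⟨γ, fun i => ?_⟩
  have hint : ∀ j, Integrable (fun ω => γ j * (Z ω j * X ω i)) μ :=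
    fun j => (hZX j i).const_mul _
  have hsum : Integrable (fun ω => ∑ j, γ j * (Z ω j * X ω i)) μ :=
    integrable_finset_sum _ fun j _ => hint j
  have hexp : (fun ω => (D ω - ∑ j, γ j * Z ω j) * X ω i)
      = fun ω => D ω * X ω i - ∑ j, γ j * (Z ω j * X ω i) := by
    funext ω
    rw [sub_mul, Finset.sum_mul]
    congr 1
    exact Finset.sum_congr rfl fun j _ => by ring
  rw [hexp, integral_sub (hDX i) hsum, integral_finset_sum _ fun j _ => hint j]
  have h1 : ∫ ω, D ω * X ω i ∂μ = ∑ k, F i k * ∫ ω, M ω k * D ω ∂μ := by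
    rw [← hXD i]; exact integral_congr_ae (Filter.Eventually.of_forall fun ω => mul_comm _ _)
  have h2 : ∀ j, ∫ ω, γ j * (Z ω j * X ω i) ∂μ = γ j * ∫ ω, X ω i * Z ω j ∂μ := by
    intro j
    rw [integral_const_mul]
    congr 1
    exact integral_congr_ae (Filter.Eventually.of_forall fun ω => mul_comm _ _)
  rw [h1]
  simp_rw [h2, hXZ i]
  have hAγ : ∀ k, ∑ j, A k j * γ j = ∫ ω, M ω k * D ω ∂μ := fun k => by
    simpa [Matrix.mulVec, dotProduct] using congrFun hγ k
  have key : ∑ j, γ j * ∑ k, F i k * ∫ ω, M ω k * Z ω j ∂μ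
      = ∑ k, F i k * ∫ ω, M ω k * D ω ∂μ := by
    calc ∑ j, γ j * ∑ k, F i k * ∫ ω, M ω k * Z ω j ∂μ
        = ∑ k, F i k * ∑ j, A k j * γ j := by
          simp_rw [Finset.mul_sum]
          rw [Finset.sum_comm]
          exact Finset.sum_congr rfl fun j _ => Finset.sum_congr rfl fun k _ => by
            simp only [hA, Matrix.of_apply]; ring
      _ = ∑ k, F i k * ∫ ω, M ω k * D ω ∂μ := by simp_rw [hAγ]
  rw [key]; ring
end

section
/- Let λ > 0, let σ ∈ ℝⁿ with σ_i ≥ 0 for all i, and let a₀ ∈ ℝⁿ satisfy a₀ᵢ = 0 whenever σ_i = 0 (the minimum-norm property). Define a_λ ∈ ℝⁿ coordinatewise by a_λ,ᵢ = σ_i²·a₀ᵢ / (σ_i² + 2λ). Then the bias of the regularized solution satisfies both bounds: Σᵢ (a_λ,ᵢ − a₀ᵢ)² ≤ 4λ² · Σ_{i : σ_i ≠ 0} a₀ᵢ² / σ_i⁴, and Σᵢ σ_i²·(a_λ,ᵢ − a₀ᵢ)² ≤ 4λ² · Σ_{i : σ_i ≠ 0} a₀ᵢ² / σ_i². -/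
/-- **bias of the regularized solution.** For `λ > 0`, `σ_i ≥ 0`, and `a₀`
with `a₀ᵢ = 0` whenever `σ_i = 0` (minimum-norm property), the regularized solution
`a_λ,ᵢ = σ_i² a₀ᵢ / (σ_i² + 2λ)` satisfies the strong-norm bias bound
`Σᵢ (a_λ,ᵢ − a₀ᵢ)² ≤ 4λ² Σ_{σᵢ ≠ 0} a₀ᵢ²/σᵢ⁴` and the weak-norm bias bound
`Σᵢ σᵢ²(a_λ,ᵢ − a₀ᵢ)² ≤ 4λ² Σ_{σᵢ ≠ 0} a₀ᵢ²/σᵢ²`. -/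
theorem regularized_solution_bias_bounds
    {n : ℕ} (lam : ℝ) (hlam : 0 < lam) (σ : Fin n → ℝ) (hσ : ∀ i, 0 ≤ σ i)
    (a₀ : Fin n → ℝ) (hmin : ∀ i, σ i = 0 → a₀ i = 0)
    (alam : Fin n → ℝ)
    (halam : alam = fun i => σ i ^ 2 * a₀ i / (σ i ^ 2 + 2 * lam)) :
    (∑ i, (alam i - a₀ i) ^ 2
        ≤ 4 * lam ^ 2 * ∑ i ∈ Finset.univ.filter (fun i => σ i ≠ 0), a₀ i ^ 2 / σ i ^ 4) ∧
    (∑ i, σ i ^ 2 * (alam i - a₀ i) ^ 2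
        ≤ 4 * lam ^ 2 * ∑ i ∈ Finset.univ.filter (fun i => σ i ≠ 0), a₀ i ^ 2 / σ i ^ 2) := by
  subst halam
  have hden : ∀ i, 0 < σ i ^ 2 + 2 * lam := fun i => by positivity
  have hdiff : ∀ i, (σ i ^ 2 * a₀ i / (σ i ^ 2 + 2 * lam) - a₀ i)
      = -(2 * lam * a₀ i) / (σ i ^ 2 + 2 * lam) := by
    intro i
    field_simp
    ring
  have hdiff2 : ∀ i, (σ i ^ 2 * a₀ i / (σ i ^ 2 + 2 * lam) - a₀ i) ^ 2
      = 4 * lam ^ 2 * a₀ i ^ 2 / (σ i ^ 2 + 2 * lam) ^ 2 := by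
    intro i
    rw [hdiff i, div_pow]
    ring_nf
  have hzero : ∀ i, σ i = 0 →
      (σ i ^ 2 * a₀ i / (σ i ^ 2 + 2 * lam) - a₀ i) ^ 2 = 0 := by
    intro i h
    rw [hmin i h]
    simp
  have hsq : ∀ i, σ i ≠ 0 → σ i ^ 2 ≤ (σ i ^ 2 + 2 * lam) := fun i _ => by nlinarith
  constructor
  · rw [← Finset.sum_subset (Finset.filter_subset (fun i => σ i ≠ 0) Finset.univ)
      (fun i _ hi => hzero i (by simpa using hi)), Finset.mul_sum]
    apply Finset.sum_le_sum
    intro i hi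
    have hi' : σ i ≠ 0 := by simpa using hi
    rw [hdiff2 i, ← mul_div_assoc, div_le_div_iff₀ (by positivity) (by positivity)]
    have h4 : σ i ^ 4 ≤ (σ i ^ 2 + 2 * lam) ^ 2 := by nlinarith [hsq i hi', sq_nonneg (σ i)]
    nlinarith [mul_le_mul_of_nonneg_left h4 (show (0:ℝ) ≤ 4 * lam ^ 2 * a₀ i ^ 2 by positivity)]
  · have hzero' : ∀ i ∈ Finset.univ \ Finset.filter (fun i => σ i ≠ 0) Finset.univ,
        σ i ^ 2 * ((fun i => σ i ^ 2 * a₀ i / (σ i ^ 2 + 2 * lam)) i - a₀ i) ^ 2 = 0 := by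
      intro i hi
      simp only [Finset.mem_sdiff, Finset.mem_filter, not_and, not_not] at hi
      rw [hzero i (by simpa using hi)]
      ring
    rw [← Finset.sum_subset (Finset.filter_subset (fun i => σ i ≠ 0) Finset.univ)
      (fun i h1 h2 => hzero' i (Finset.mem_sdiff.mpr ⟨h1, h2⟩)), Finset.mul_sum]
    apply Finset.sum_le_sum
    intro i hi
    have hi' : σ i ≠ 0 := by simpa using hi
    simp only
    rw [hdiff2 i, mul_div_assoc', ← mul_div_assoc, div_le_div_iff₀ (by positivity) (by positivity)]
    have h4 : σ i ^ 4 ≤ (σ i ^ 2 + 2 * lam) ^ 2 := by nlinarith [hsq i hi', sq_nonneg (σ i)]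
    nlinarith [mul_le_mul_of_nonneg_left h4 (show (0:ℝ) ≤ 4 * lam ^ 2 * a₀ i ^ 2 by positivity)]
end

section
/- Let A and B be real symmetric positive semidefinite n × n matrices and let c > 0 be such that ⟨x, A x⟩ ≥ c·‖x‖² for all x ∈ ℝⁿ (i.e., the smallest eigenvalue of A is at least c). Then the positive semidefinite square roots satisfy the perturbation bound ‖B^{1/2} − A^{1/2}‖ ≤ ‖B − A‖ / √c, where ‖·‖ denotes the ℓ²-operator norm on matrices. -/
open Matrix

/-- The positive semidefinite square root, with the definition of the older Mathlib
(`Matrix.PosSemidef.sqrt`, removed since). -/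
noncomputable def Matrix.PosSemidef.sqrt {n : Type*} [Fintype n] [DecidableEq n]
    {A : Matrix n n ℝ} (hA : A.PosSemidef) : Matrix n n ℝ :=
  hA.1.eigenvectorUnitary.1 * diagonal ((↑) ∘ (√·) ∘ hA.1.eigenvalues) *
    (star hA.1.eigenvectorUnitary : Matrix n n ℝ)

lemma Matrix.PosSemidef.posSemidef_sqrt {n : Type*} [Fintype n] [DecidableEq n]
    {A : Matrix n n ℝ} (hA : A.PosSemidef) : hA.sqrt.PosSemidef := by
  unfold Matrix.PosSemidef.sqrt
  have h := (posSemidef_diagonal_iff (d := ((↑) ∘ (√·) ∘ hA.1.eigenvalues : n → ℝ))).mpr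
    (fun i => by simp [Real.sqrt_nonneg])
  exact h.mul_mul_conjTranspose_same (hA.1.eigenvectorUnitary.1)

lemma Matrix.PosSemidef.sqrt_mul_self {n : Type*} [Fintype n] [DecidableEq n]
    {A : Matrix n n ℝ} (hA : A.PosSemidef) : hA.sqrt * hA.sqrt = A := by
  unfold Matrix.PosSemidef.sqrt
  set C : Matrix n n ℝ := hA.1.eigenvectorUnitary.1
  have hC : (star hA.1.eigenvectorUnitary : Matrix n n ℝ) * C = 1 := by
    simp [C]
  have hE : diagonal ((↑) ∘ (√·) ∘ hA.1.eigenvalues : n → ℝ)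
      * diagonal ((↑) ∘ (√·) ∘ hA.1.eigenvalues : n → ℝ)
      = diagonal (RCLike.ofReal ∘ hA.1.eigenvalues) := by
    rw [diagonal_mul_diagonal]
    congr 1; funext v
    simp [Real.mul_self_sqrt (hA.eigenvalues_nonneg v)]
  calc C * diagonal ((↑) ∘ (√·) ∘ hA.1.eigenvalues) * (star hA.1.eigenvectorUnitary : Matrix n n ℝ)
        * (C * diagonal ((↑) ∘ (√·) ∘ hA.1.eigenvalues) * (star hA.1.eigenvectorUnitary : Matrix n n ℝ))
      = C * (diagonal ((↑) ∘ (√·) ∘ hA.1.eigenvalues) * ((star hA.1.eigenvectorUnitary : Matrix n n ℝ) * C)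
        * diagonal ((↑) ∘ (√·) ∘ hA.1.eigenvalues)) * (star hA.1.eigenvectorUnitary : Matrix n n ℝ) := by
        simp only [mul_assoc]
    _ = A := by
        rw [hC, mul_one, hE]
        conv_rhs => rw [hA.1.spectral_theorem]
        simp [C, Unitary.conjStarAlgAut_apply]

variable {n : ℕ}

private lemma selfadj_clm (S : Matrix (Fin n) (Fin n) ℝ) (hS : S.IsHermitian) :
    IsSelfAdjoint (toEuclideanCLM (𝕜 := ℝ) S) := by
  rw [_root_.IsSelfAdjoint, ← map_star, star_eq_conjTranspose, hS.eq]

private lemma clm_basis (S : Matrix (Fin n) (Fin n) ℝ) (hS : S.IsHermitian) (i : Fin n) :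
    (toEuclideanCLM (𝕜 := ℝ) S) (hS.eigenvectorBasis i)
      = hS.eigenvalues i • hS.eigenvectorBasis i := by
  apply (WithLp.equiv 2 (Fin n → ℝ)).injective
  simp [ofLp_toEuclideanCLM, Matrix.toLin'_apply, hS.mulVec_eigenvectorBasis i]

private lemma repr_clm (S : Matrix (Fin n) (Fin n) ℝ) (hS : S.IsHermitian)
    (x : EuclideanSpace ℝ (Fin n)) (i : Fin n) :
    hS.eigenvectorBasis.repr (toEuclideanCLM (𝕜 := ℝ) S x) i
      = hS.eigenvalues i * hS.eigenvectorBasis.repr x i := by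
  have hsym := (selfadj_clm S hS).isSymmetric (hS.eigenvectorBasis i) x
  simp only [ContinuousLinearMap.coe_coe] at hsym
  rw [OrthonormalBasis.repr_apply_apply, OrthonormalBasis.repr_apply_apply,
    ← hsym, clm_basis S hS i, inner_smul_left]
  simp

private lemma clm_norm_le (S : Matrix (Fin n) (Fin n) ℝ) (hS : S.IsHermitian)
    (M : ℝ) (hM : 0 ≤ M) (h : ∀ i, |hS.eigenvalues i| ≤ M) :
    ‖toEuclideanCLM (𝕜 := ℝ) S‖ ≤ M := by
  apply ContinuousLinearMap.opNorm_le_bound _ hM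
  intro x
  set b := hS.eigenvectorBasis with hb
  rw [← b.repr.norm_map (toEuclideanCLM (𝕜 := ℝ) S x), ← b.repr.norm_map x,
    EuclideanSpace.norm_eq, EuclideanSpace.norm_eq,
    ← Real.sqrt_sq hM, ← Real.sqrt_mul (by positivity)]
  apply Real.sqrt_le_sqrt
  rw [Finset.mul_sum]
  apply Finset.sum_le_sum
  intro i _
  rw [hb, repr_clm S hS x i, Real.norm_eq_abs, Real.norm_eq_abs, abs_mul, mul_pow]
  exact mul_le_mul_of_nonneg_right (pow_le_pow_left₀ (abs_nonneg _) (h i) 2) (by positivity)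

private lemma sum_sq_eq (y : EuclideanSpace ℝ (Fin n)) : ∑ i, y i ^ 2 = ‖y‖ ^ 2 := by
  rw [EuclideanSpace.norm_eq, Real.sq_sqrt (by positivity)]
  simp [sq_abs]

private lemma quad_ge (X : Matrix (Fin n) (Fin n) ℝ) (hX : X.IsHermitian)
    (m : ℝ) (h : ∀ i, m ≤ hX.eigenvalues i) (x : Fin n → ℝ) :
    m * (∑ i, x i ^ 2) ≤ x ⬝ᵥ X *ᵥ x := by
  set y : EuclideanSpace ℝ (Fin n) := (WithLp.equiv 2 (Fin n → ℝ)).symm x with hy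
  set b := hX.eigenvectorBasis with hb
  have h1 : x ⬝ᵥ X *ᵥ x = inner ℝ y ((toEuclideanCLM (𝕜 := ℝ) X) y) := by
    rw [EuclideanSpace.inner_eq_star_dotProduct]
    simp [hy, Matrix.toLin'_apply]
    exact dotProduct_comm _ _
  have h2 : (inner ℝ y ((toEuclideanCLM (𝕜 := ℝ) X) y) : ℝ)
      = ∑ i, hX.eigenvalues i * (b.repr y i) ^ 2 := by
    rw [← b.repr.inner_map_map y ((toEuclideanCLM (𝕜 := ℝ) X) y)]
    simp only [PiLp.inner_apply, RCLike.inner_apply, starRingEnd_apply, star_trivial]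
    refine Finset.sum_congr rfl fun i _ => ?_
    rw [hb, repr_clm X hX y i]; ring
  have h3 : ∑ i, x i ^ 2 = ∑ i, (b.repr y i) ^ 2 := by
    rw [sum_sq_eq (b.repr y), b.repr.norm_map y, ← sum_sq_eq y]
    rfl
  rw [h1, h2, h3, Finset.mul_sum]
  exact Finset.sum_le_sum fun i _ => mul_le_mul_of_nonneg_right (h i) (by positivity)

private lemma sqrt_eig_ge {A : Matrix (Fin n) (Fin n) ℝ} (hA : A.PosSemidef)
    {c : ℝ}
    (hmin : ∀ x : Fin n → ℝ, c * (∑ i, x i ^ 2) ≤ x ⬝ᵥ A.mulVec x) (i : Fin n) :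
    Real.sqrt c ≤ hA.posSemidef_sqrt.1.eigenvalues i := by
  set hX := hA.posSemidef_sqrt.1 with hhX
  have hAv : A *ᵥ ⇑(hX.eigenvectorBasis i) = (hX.eigenvalues i ^ 2) • ⇑(hX.eigenvectorBasis i) := by
    have h2 : (hA.sqrt * hA.sqrt) *ᵥ ⇑(hX.eigenvectorBasis i)
        = (hX.eigenvalues i ^ 2) • ⇑(hX.eigenvectorBasis i) := by
      rw [← mulVec_mulVec, hX.mulVec_eigenvectorBasis i, Matrix.mulVec_smul,
        hX.mulVec_eigenvectorBasis i, smul_smul, sq]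
    rwa [hA.sqrt_mul_self] at h2
  set v : Fin n → ℝ := ⇑(hX.eigenvectorBasis i) with hv
  have hnorm : ∑ j, v j ^ 2 = 1 := by
    have h1 : ‖hX.eigenvectorBasis i‖ = 1 := hX.eigenvectorBasis.orthonormal.1 i
    have := sum_sq_eq (hX.eigenvectorBasis i)
    rw [h1] at this
    simpa using this
  have h1 := hmin v
  rw [hnorm, mul_one] at h1
  rw [hAv, dotProduct_smul, smul_eq_mul] at h1
  have hvv : v ⬝ᵥ v = 1 := by
    rw [← hnorm]; simp [dotProduct, sq]
  rw [hvv, mul_one] at h1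
  have hν : 0 ≤ hX.eigenvalues i := hA.posSemidef_sqrt.eigenvalues_nonneg i
  calc Real.sqrt c ≤ Real.sqrt (hX.eigenvalues i ^ 2) := Real.sqrt_le_sqrt h1
    _ = hX.eigenvalues i := Real.sqrt_sq hν


/-- **perturbation bound for PSD square roots.** If `A, B` are real
symmetric positive semidefinite matrices and `⟨x, Ax⟩ ≥ c‖x‖²` for all `x` with `c > 0`,
then `‖B^{1/2} − A^{1/2}‖ ≤ ‖B − A‖ / √c` in the `ℓ²`-operator norm. -/
theorem psd_sqrt_perturbation_bound
    {n : ℕ} (A B : Matrix (Fin n) (Fin n) ℝ)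
    (hA : A.PosSemidef) (hB : B.PosSemidef)
    (c : ℝ) (hc : 0 < c)
    (hmin : ∀ x : Fin n → ℝ, c * (∑ i, x i ^ 2) ≤ x ⬝ᵥ A.mulVec x) :
    ‖Matrix.toEuclideanCLM (𝕜 := ℝ) (hB.sqrt - hA.sqrt)‖
      ≤ ‖Matrix.toEuclideanCLM (𝕜 := ℝ) (B - A)‖ / Real.sqrt c := by
  have hsc : 0 < Real.sqrt c := Real.sqrt_pos.mpr hc
  rw [le_div_iff₀ hsc]
  rcases Nat.eq_zero_or_pos n with hn | hn
  · subst hn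
    have hz : (toEuclideanCLM (𝕜 := ℝ) (hB.sqrt - hA.sqrt)) = 0 := by
      ext x j
      exact j.elim0
    rw [hz, norm_zero, zero_mul]
    positivity
  haveI : Nonempty (Fin n) := ⟨⟨0, hn⟩⟩
  set S := hB.sqrt - hA.sqrt with hSdef
  have hS : S.IsHermitian := hB.posSemidef_sqrt.1.sub hA.posSemidef_sqrt.1
  obtain ⟨i₀, -, hmax⟩ := Finset.exists_max_image Finset.univ
    (fun i => |hS.eigenvalues i|) Finset.univ_nonempty
  set lam := hS.eigenvalues i₀ with hlam
  have hSv : S *ᵥ ⇑(hS.eigenvectorBasis i₀) = lam • ⇑(hS.eigenvectorBasis i₀) :=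
    hS.mulVec_eigenvectorBasis i₀
  set v : Fin n → ℝ := ⇑(hS.eigenvectorBasis i₀) with hv
  have hnormv : ∑ j, v j ^ 2 = 1 := by
    have h1 : ‖hS.eigenvectorBasis i₀‖ = 1 := hS.eigenvectorBasis.orthonormal.1 i₀
    have := sum_sq_eq (hS.eigenvectorBasis i₀)
    rw [h1] at this
    simpa using this
  have hBA : B - A = hB.sqrt * S + S * hA.sqrt := by
    rw [hSdef, mul_sub, sub_mul, hB.sqrt_mul_self, hA.sqrt_mul_self]
    abel
  have hterm1 : v ⬝ᵥ (hB.sqrt * S) *ᵥ v = lam * (v ⬝ᵥ hB.sqrt *ᵥ v) := by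
    rw [← mulVec_mulVec, hSv, Matrix.mulVec_smul, dotProduct_smul, smul_eq_mul]
  have hStr : Sᵀ = S := by
    rw [← Matrix.conjTranspose_eq_transpose_of_trivial, hS.eq]
  have hvS : v ᵥ* S = S *ᵥ v := by
    conv_lhs => rw [← hStr]
    rw [Matrix.vecMul_transpose]
  have hterm2 : v ⬝ᵥ (S * hA.sqrt) *ᵥ v = lam * (v ⬝ᵥ hA.sqrt *ᵥ v) := by
    rw [← mulVec_mulVec, Matrix.dotProduct_mulVec, hvS, hSv, smul_dotProduct,
      smul_eq_mul]
  have hkey : v ⬝ᵥ (B - A) *ᵥ v = lam * (v ⬝ᵥ hB.sqrt *ᵥ v + v ⬝ᵥ hA.sqrt *ᵥ v) := by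
    rw [hBA, Matrix.add_mulVec, dotProduct_add, hterm1, hterm2]
    ring
  have hXlow : Real.sqrt c ≤ v ⬝ᵥ hA.sqrt *ᵥ v := by
    have := quad_ge hA.sqrt hA.posSemidef_sqrt.1 (Real.sqrt c) (sqrt_eig_ge hA hmin) v
    rwa [hnormv, mul_one] at this
  have hYnn : 0 ≤ v ⬝ᵥ hB.sqrt *ᵥ v := by
    have := hB.posSemidef_sqrt.dotProduct_mulVec_nonneg v
    simpa using this
  have habs : |v ⬝ᵥ (B - A) *ᵥ v| ≤ ‖Matrix.toEuclideanCLM (𝕜 := ℝ) (B - A)‖ := by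
    have hny : ‖hS.eigenvectorBasis i₀‖ = 1 := hS.eigenvectorBasis.orthonormal.1 i₀
    have hiq : v ⬝ᵥ (B - A) *ᵥ v
        = inner ℝ (hS.eigenvectorBasis i₀)
            ((toEuclideanCLM (𝕜 := ℝ) (B - A)) (hS.eigenvectorBasis i₀)) := by
      rw [EuclideanSpace.inner_eq_star_dotProduct]
      simp [hv, Matrix.toLin'_apply]
      rw [Matrix.sub_mulVec, dotProduct_sub]
      rw [dotProduct_comm (B *ᵥ _), dotProduct_comm (A *ᵥ _)]
    rw [hiq]
    calc |inner ℝ (hS.eigenvectorBasis i₀)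
            ((toEuclideanCLM (𝕜 := ℝ) (B - A)) (hS.eigenvectorBasis i₀))|
        ≤ ‖hS.eigenvectorBasis i₀‖
            * ‖(toEuclideanCLM (𝕜 := ℝ) (B - A)) (hS.eigenvectorBasis i₀)‖ :=
          abs_real_inner_le_norm _ _
      _ ≤ ‖hS.eigenvectorBasis i₀‖
            * (‖toEuclideanCLM (𝕜 := ℝ) (B - A)‖ * ‖hS.eigenvectorBasis i₀‖) := by
          gcongr
          exact (toEuclideanCLM (𝕜 := ℝ) (B - A)).le_opNorm _
      _ = ‖toEuclideanCLM (𝕜 := ℝ) (B - A)‖ := by rw [hny]; ring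
  have hnormS : ‖toEuclideanCLM (𝕜 := ℝ) S‖ ≤ |lam| :=
    clm_norm_le S hS |lam| (abs_nonneg _) (fun i => hmax i (Finset.mem_univ i))
  calc ‖toEuclideanCLM (𝕜 := ℝ) S‖ * Real.sqrt c
      ≤ |lam| * Real.sqrt c := mul_le_mul_of_nonneg_right hnormS hsc.le
    _ ≤ |lam| * (v ⬝ᵥ hB.sqrt *ᵥ v + v ⬝ᵥ hA.sqrt *ᵥ v) := by
        have hsum : Real.sqrt c ≤ v ⬝ᵥ hB.sqrt *ᵥ v + v ⬝ᵥ hA.sqrt *ᵥ v := by linarith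
        exact mul_le_mul_of_nonneg_left hsum (abs_nonneg _)
    _ = |v ⬝ᵥ (B - A) *ᵥ v| := by
        have hsum : (0:ℝ) ≤ v ⬝ᵥ hB.sqrt *ᵥ v + v ⬝ᵥ hA.sqrt *ᵥ v := by
          have := Real.sqrt_nonneg c; linarith
        rw [hkey, abs_mul, abs_of_nonneg hsum]
    _ ≤ ‖Matrix.toEuclideanCLM (𝕜 := ℝ) (B - A)‖ := habs
end

section
/- Let (Ω, 𝓕, μ) be a probability space. Let D : Ω → ℝ be square-integrable with E[D] = 0 and E[D²] > 0, let ε_M, ε_Z, ε_X : Ω → ℝ be square-integrable with mean zero, and suppose D, ε_M, ε_Z, ε_X are mutually independent. Let a, e, f, σ_z, σ_x ∈ ℝ with e ≠ 0 and f ≠ 0, suppose σ_m² := E[ε_M²] > 0, and define M = a·D + ε_M, Z = e·M + σ_z·ε_Z, X = f·M + σ_x·ε_X. Then E[M²] = σ_m² + a²·E[D²] > 0, the scalar γ⋆ := E[D·X]/E[X·Z] equals (a/e)·E[D²]/E[M²] and satisfies the dual equation E[X·(D − γ⋆·Z)] = 0, and the identification-strength denominator satisfies E[D·(D − γ⋆·Z)]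 = E[D²]·σ_m² / (σ_m² + a²·E[D²]). -/
open MeasureTheory ProbabilityTheory

private lemma l2_mul_integrable {Ω : Type*} [MeasurableSpace Ω] (μ : Measure Ω)
    {f g : Ω → ℝ} (hf : MemLp f 2 μ) (hg : MemLp g 2 μ) :
    Integrable (fun ω => f ω * g ω) μ := by
  have h := hg.smul (r := 1) hf
  rw [memLp_one_iff_integrable] at h
  exact h

/-- **scalar weak-identification example.** With `M = a·D + ε_M`,
`Z = e·M + σ_z·ε_Z`, `X = f·M + σ_x·ε_X`, `D, ε_M, ε_Z, ε_X` mean-zero, square-integrable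
and mutually independent, `E[D²] > 0`, `σ_m² := E[ε_M²] > 0`, `e ≠ 0`, `f ≠ 0`:
`E[M²] = σ_m² + a²E[D²] > 0`, the scalar `γ⋆ = E[D·X]/E[X·Z]` equals
`(a/e)·E[D²]/E[M²]` and solves the dual equation `E[X·(D − γ⋆·Z)] = 0`, and
`E[D·(D − γ⋆·Z)] = E[D²]·σ_m²/(σ_m² + a²E[D²])`. -/
theorem scalar_weak_identification_example
    {Ω : Type*} [MeasurableSpace Ω] (μ : Measure Ω) [IsProbabilityMeasure μ]
    (D εM εZ εX : Ω → ℝ)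
    -- square integrability
    (hD2 : MemLp D 2 μ) (hεM2 : MemLp εM 2 μ) (hεZ2 : MemLp εZ 2 μ) (hεX2 : MemLp εX 2 μ)
    -- mean zero
    (hDmean : ∫ ω, D ω ∂μ = 0) (hεMmean : ∫ ω, εM ω ∂μ = 0)
    (hεZmean : ∫ ω, εZ ω ∂μ = 0) (hεXmean : ∫ ω, εX ω ∂μ = 0)
    -- `E[D²] > 0` and `σ_m² := E[ε_M²] > 0`
    (hDvar : 0 < ∫ ω, D ω ^ 2 ∂μ) (hσm : 0 < ∫ ω, εM ω ^ 2 ∂μ)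
    -- mutual independence of `D, ε_M, ε_Z, ε_X`
    (hindep : iIndepFun
      ![D, εM, εZ, εX] μ)
    (a e f σz σx : ℝ) (he : e ≠ 0) (hf : f ≠ 0)
    (M Z X : Ω → ℝ)
    (hM : M = fun ω => a * D ω + εM ω)
    (hZ : Z = fun ω => e * M ω + σz * εZ ω)
    (hX : X = fun ω => f * M ω + σx * εX ω) :
    ((∫ ω, M ω ^ 2 ∂μ) = (∫ ω, εM ω ^ 2 ∂μ) + a ^ 2 * ∫ ω, D ω ^ 2 ∂μ ∧
      0 < ∫ ω, M ω ^ 2 ∂μ) ∧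
    ((∫ ω, D ω * X ω ∂μ) / (∫ ω, X ω * Z ω ∂μ)
        = (a / e) * (∫ ω, D ω ^ 2 ∂μ) / (∫ ω, M ω ^ 2 ∂μ) ∧
      ∫ ω, X ω * (D ω - ((∫ ω', D ω' * X ω' ∂μ) / (∫ ω', X ω' * Z ω' ∂μ)) * Z ω) ∂μ
        = 0) ∧
    ∫ ω, D ω * (D ω - ((∫ ω', D ω' * X ω' ∂μ) / (∫ ω', X ω' * Z ω' ∂μ)) * Z ω) ∂μ
      = (∫ ω, D ω ^ 2 ∂μ) * (∫ ω, εM ω ^ 2 ∂μ)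
          / ((∫ ω, εM ω ^ 2 ∂μ) + a ^ 2 * ∫ ω, D ω ^ 2 ∂μ) := by
  -- basic integrability
  have iDD : Integrable (fun ω => D ω ^ 2) μ := hD2.integrable_sq
  have iMM : Integrable (fun ω => εM ω ^ 2) μ := hεM2.integrable_sq
  have i01 : Integrable (fun ω => D ω * εM ω) μ := l2_mul_integrable μ hD2 hεM2
  have i02 : Integrable (fun ω => D ω * εZ ω) μ := l2_mul_integrable μ hD2 hεZ2
  have i03 : Integrable (fun ω => D ω * εX ω) μ := l2_mul_integrable μ hD2 hεX2
  have i12 : Integrable (fun ω => εM ω * εZ ω) μ := l2_mul_integrable μ hεM2 hεZ2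
  have i13 : Integrable (fun ω => εM ω * εX ω) μ := l2_mul_integrable μ hεM2 hεX2
  have i23 : Integrable (fun ω => εZ ω * εX ω) μ := l2_mul_integrable μ hεZ2 hεX2
  -- vanishing cross moments
  have h01 : ∫ ω, D ω * εM ω ∂μ = 0 := by
    have h := (hindep.indepFun (i := 0) (j := 1) (by decide)).integral_fun_mul_eq_mul_integral hD2.1 hεM2.1
    simp only [Matrix.cons_val_zero, Matrix.cons_val_one, Matrix.head_cons] at h
    simpa [hDmean] using h
  have h02 : ∫ ω, D ω * εZ ω ∂μ = 0 := by
    have h := (hindep.indepFun (i := 0) (j := 2) (by decide)).integral_fun_mul_eq_mul_integral hD2.1 hεZ2.1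
    simp only [Matrix.cons_val_zero, Matrix.cons_val_two, Matrix.tail_cons,
      Matrix.head_cons] at h
    simpa [hDmean] using h
  have h03 : ∫ ω, D ω * εX ω ∂μ = 0 := by
    have h := (hindep.indepFun (i := 0) (j := 3) (by decide)).integral_fun_mul_eq_mul_integral hD2.1 hεX2.1
    simp only [Matrix.cons_val_zero, Matrix.cons_val_three, Matrix.tail_cons,
      Matrix.head_cons] at h
    simpa [hDmean] using h
  have h12 : ∫ ω, εM ω * εZ ω ∂μ = 0 := by
    have h := (hindep.indepFun (i := 1) (j := 2) (by decide)).integral_fun_mul_eq_mul_integral hεM2.1 hεZ2.1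
    simp only [Matrix.cons_val_one, Matrix.cons_val_two, Matrix.tail_cons,
      Matrix.head_cons] at h
    simpa [hεMmean] using h
  have h13 : ∫ ω, εM ω * εX ω ∂μ = 0 := by
    have h := (hindep.indepFun (i := 1) (j := 3) (by decide)).integral_fun_mul_eq_mul_integral hεM2.1 hεX2.1
    simp only [Matrix.cons_val_one, Matrix.cons_val_three, Matrix.tail_cons,
      Matrix.head_cons] at h
    simpa [hεMmean] using h
  have h23 : ∫ ω, εZ ω * εX ω ∂μ = 0 := by
    have h := (hindep.indepFun (i := 2) (j := 3) (by decide)).integral_fun_mul_eq_mul_integral hεZ2.1 hεX2.1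
    simp only [Matrix.cons_val_two, Matrix.cons_val_three, Matrix.tail_cons,
      Matrix.head_cons] at h
    simpa [hεZmean] using h
  set d2 := ∫ ω, D ω ^ 2 ∂μ with hd2
  set s := ∫ ω, εM ω ^ 2 ∂μ with hs
  -- master linear-combination formula
  have base : ∀ c1 c2 c3 c4 c5 c6 c7 c8 : ℝ,
      ∫ ω, (c1 * D ω ^ 2 + c2 * εM ω ^ 2 + c3 * (D ω * εM ω) + c4 * (D ω * εZ ω)
        + c5 * (εM ω * εZ ω) + c6 * (D ω * εX ω) + c7 * (εM ω * εX ω)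
        + c8 * (εZ ω * εX ω)) ∂μ = c1 * d2 + c2 * s := by
    intro c1 c2 c3 c4 c5 c6 c7 c8
    have I1 := iDD.const_mul c1
    have I2 := iMM.const_mul c2
    have I3 := i01.const_mul c3
    have I4 := i02.const_mul c4
    have I5 := i12.const_mul c5
    have I6 := i03.const_mul c6
    have I7 := i13.const_mul c7
    have I8 := i23.const_mul c8
    have J2 : Integrable (fun ω => c1 * D ω ^ 2 + c2 * εM ω ^ 2) μ := I1.add I2
    have J3 : Integrable (fun ω => c1 * D ω ^ 2 + c2 * εM ω ^ 2
        + c3 * (D ω * εM ω)) μ := J2.add I3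
    have J4 : Integrable (fun ω => c1 * D ω ^ 2 + c2 * εM ω ^ 2 + c3 * (D ω * εM ω)
        + c4 * (D ω * εZ ω)) μ := J3.add I4
    have J5 : Integrable (fun ω => c1 * D ω ^ 2 + c2 * εM ω ^ 2 + c3 * (D ω * εM ω)
        + c4 * (D ω * εZ ω) + c5 * (εM ω * εZ ω)) μ := J4.add I5
    have J6 : Integrable (fun ω => c1 * D ω ^ 2 + c2 * εM ω ^ 2 + c3 * (D ω * εM ω)
        + c4 * (D ω * εZ ω) + c5 * (εM ω * εZ ω) + c6 * (D ω * εX ω)) μ := J5.add I6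
    have J7 : Integrable (fun ω => c1 * D ω ^ 2 + c2 * εM ω ^ 2 + c3 * (D ω * εM ω)
        + c4 * (D ω * εZ ω) + c5 * (εM ω * εZ ω) + c6 * (D ω * εX ω)
        + c7 * (εM ω * εX ω)) μ := J6.add I7
    rw [integral_add J7 I8, integral_add J6 I7, integral_add J5 I6, integral_add J4 I5,
      integral_add J3 I4, integral_add J2 I3, integral_add I1 I2,
      integral_const_mul, integral_const_mul, integral_const_mul, integral_const_mul,
      integral_const_mul, integral_const_mul, integral_const_mul, integral_const_mul,
      h01, h02, h03, h12, h13, h23]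
    ring
  -- key second moments
  have hMM : ∫ ω, M ω ^ 2 ∂μ = s + a ^ 2 * d2 := by
    have e1 : (fun ω => M ω ^ 2) = fun ω =>
        (a ^ 2) * D ω ^ 2 + 1 * εM ω ^ 2 + (2 * a) * (D ω * εM ω) + 0 * (D ω * εZ ω)
          + 0 * (εM ω * εZ ω) + 0 * (D ω * εX ω) + 0 * (εM ω * εX ω)
          + 0 * (εZ ω * εX ω) := by
      funext ω; rw [hM]; ring
    rw [e1, base]; ring
  have hDX : ∫ ω, D ω * X ω ∂μ = f * a * d2 := by
    have e1 : (fun ω => D ω * X ω) = fun ω =>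
        (f * a) * D ω ^ 2 + 0 * εM ω ^ 2 + f * (D ω * εM ω) + 0 * (D ω * εZ ω)
          + 0 * (εM ω * εZ ω) + σx * (D ω * εX ω) + 0 * (εM ω * εX ω)
          + 0 * (εZ ω * εX ω) := by
      funext ω; rw [hX, hM]; ring
    rw [e1, base]; ring
  have hDZ : ∫ ω, D ω * Z ω ∂μ = e * a * d2 := by
    have e1 : (fun ω => D ω * Z ω) = fun ω =>
        (e * a) * D ω ^ 2 + 0 * εM ω ^ 2 + e * (D ω * εM ω) + σz * (D ω * εZ ω)
          + 0 * (εM ω * εZ ω) + 0 * (D ω * εX ω) + 0 * (εM ω * εX ω)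
          + 0 * (εZ ω * εX ω) := by
      funext ω; rw [hZ, hM]; ring
    rw [e1, base]; ring
  have hXZ : ∫ ω, X ω * Z ω ∂μ = e * f * (s + a ^ 2 * d2) := by
    have e1 : (fun ω => X ω * Z ω) = fun ω =>
        (e * f * a ^ 2) * D ω ^ 2 + (e * f) * εM ω ^ 2 + (2 * e * f * a) * (D ω * εM ω)
          + (f * σz * a) * (D ω * εZ ω) + (f * σz) * (εM ω * εZ ω)
          + (e * σx * a) * (D ω * εX ω) + (e * σx) * (εM ω * εX ω)
          + (σx * σz) * (εZ ω * εX ω) := by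
      funext ω; rw [hX, hZ, hM]; ring
    rw [e1, base]; ring
  -- positivity of E[M²]
  have hpos : 0 < s + a ^ 2 * d2 := by
    have : 0 ≤ a ^ 2 * d2 := mul_nonneg (sq_nonneg a) hDvar.le
    linarith
  have hden : e * f * (s + a ^ 2 * d2) ≠ 0 := by positivity
  -- γ⋆
  set r := (∫ ω, D ω * X ω ∂μ) / (∫ ω, X ω * Z ω ∂μ) with hr
  have hrval : r = (f * a * d2) / (e * f * (s + a ^ 2 * d2)) := by rw [hr, hDX, hXZ]
  -- integrability of the compound random variables
  have hM2 : MemLp M 2 μ := by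
    rw [hM]; exact (hD2.const_mul a).add hεM2
  have hZ2 : MemLp Z 2 μ := by
    rw [hZ]; exact (hM2.const_mul e).add (hεZ2.const_mul σz)
  have hX2 : MemLp X 2 μ := by
    rw [hX]; exact (hM2.const_mul f).add (hεX2.const_mul σx)
  have iDX : Integrable (fun ω => D ω * X ω) μ := l2_mul_integrable μ hD2 hX2
  have iXZ : Integrable (fun ω => X ω * Z ω) μ := l2_mul_integrable μ hX2 hZ2
  have iDZ : Integrable (fun ω => D ω * Z ω) μ := l2_mul_integrable μ hD2 hZ2
  -- dual equation
  have hdual : ∫ ω, X ω * (D ω - r * Z ω) ∂μ = 0 := by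
    have e1 : (fun ω => X ω * (D ω - r * Z ω))
        = fun ω => D ω * X ω - r * (X ω * Z ω) := by funext ω; ring
    rw [e1, integral_sub iDX (iXZ.const_mul r), integral_const_mul, hDX, hXZ, hrval]
    field_simp
    ring
  have hstr : ∫ ω, D ω * (D ω - r * Z ω) ∂μ = d2 * s / (s + a ^ 2 * d2) := by
    have e1 : (fun ω => D ω * (D ω - r * Z ω))
        = fun ω => D ω ^ 2 - r * (D ω * Z ω) := by funext ω; ring
    rw [e1, integral_sub iDD (iDZ.const_mul r), integral_const_mul, hDZ, hrval, ← hd2]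
    field_simp
    ring
  refine ⟨⟨hMM, hMM ▸ hpos⟩, ⟨?_, hdual⟩, hstr⟩
  rw [hrval, hMM]
  field_simp
end
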